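/- arXiv:2403.06850 — 11 statements merged into one kernel-verified Lean document; each statement's English description precedes it below -/
import Mathlib

section
/- Let H = (V,E) be a finite linear hypergraph such that every hyperedge e ∈ E contains a vertex x with deg_H(x) ≤ |e|. Then the chromatic index of H satisfies q(H) ≤ Δ([H]_2) + 1, where Δ([H]_2) is the maximum degree of the 2-section of H. -/
open Finset

variable {V : Type*}

/-- The degree of a vertex `x`: number of hyperedges containing `x`. -/
def hyperDeg [DecidableEq V] (E : Finset (Finset V)) (x : V) : ℕ :=
  (E.filter fun e => x ∈ e).card

/-- A hypergraph is linear if two distinct hyperedges share at most one vertex. -/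
def Linear [DecidableEq V] (E : Finset (Finset V)) : Prop :=
  ∀ e ∈ E, ∀ f ∈ E, e ≠ f → (e ∩ f).card ≤ 1

/-- The degree of a hyperedge `e`: number of other hyperedges meeting `e`. -/
def edgeDeg [DecidableEq V] (E : Finset (Finset V)) (e : Finset V) : ℕ :=
  (E.filter fun a => a ≠ e ∧ (a ∩ e).Nonempty).card

/-- Degree of a vertex in the 2-section of the hypergraph. -/
def deg2 [Fintype V] [DecidableEq V] (E : Finset (Finset V)) (x : V) : ℕ :=
  (Finset.univ.filter fun y => y ≠ x ∧ ∃ e ∈ E, x ∈ e ∧ y ∈ e).card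

/-- Maximum degree of the 2-section. -/
def maxDeg2 [Fintype V] [DecidableEq V] (E : Finset (Finset V)) : ℕ :=
  Finset.univ.sup (deg2 E)

/-- Minimum degree of the 2-section. -/
noncomputable def minDeg2 [Fintype V] [DecidableEq V] (E : Finset (Finset V)) : ℕ :=
  sInf (Set.range (deg2 E))

/-- Maximum vertex degree of the hypergraph. -/
def maxDeg [Fintype V] [DecidableEq V] (E : Finset (Finset V)) : ℕ :=
  Finset.univ.sup (hyperDeg E)

/-- A proper hyperedge coloring with `q` colors. -/
def ColorableWith [DecidableEq V] (E : Finset (Finset V)) (q : ℕ) : Prop :=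
  ∃ c : Finset V → Fin q, ∀ e ∈ E, ∀ f ∈ E, e ≠ f → (e ∩ f).Nonempty → c e ≠ c f

/-- The chromatic index: least number of colors in a proper hyperedge coloring. -/
noncomputable def chromIndex [DecidableEq V] (E : Finset (Finset V)) : ℕ :=
  sInf {q | ColorableWith E q}

/-- Greedy coloring: if for each edge, the number of intersecting edges of
card at least its own is at most D, then D+1 colors suffice. -/
lemma greedy [DecidableEq V] (D : ℕ) :
    ∀ E : Finset (Finset V),
      (∀ e ∈ E, (E.filter fun f => f ≠ e ∧ (f ∩ e).Nonempty ∧ e.card ≤ f.card).card ≤ D) →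
      ColorableWith E (D + 1) := by
  intro E
  induction E using Finset.strongInduction with
  | _ E ih =>
    intro hE
    rcases E.eq_empty_or_nonempty with rfl | hne
    · exact ⟨fun _ => ⟨0, Nat.succ_pos D⟩, by simp⟩
    obtain ⟨e, he, hmin⟩ := E.exists_min_image Finset.card hne
    have hss : E.erase e ⊂ E := Finset.erase_ssubset he
    obtain ⟨c, hc⟩ := ih _ hss (fun a ha => by
      refine le_trans (Finset.card_le_card ?_) (hE a (Finset.mem_of_mem_erase ha))
      exact Finset.filter_subset_filter _ (Finset.erase_subset _ _))
    set Fb := (E.erase e).filter (fun f => (f ∩ e).Nonempty) with hFb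
    have hFbsub : Fb ⊆ E.filter fun f => f ≠ e ∧ (f ∩ e).Nonempty ∧ e.card ≤ f.card := by
      intro f hf
      simp only [hFb, Finset.mem_filter, Finset.mem_erase] at hf
      exact Finset.mem_filter.mpr ⟨hf.1.2, hf.1.1, hf.2, hmin f hf.1.2⟩
    have hFbcard : Fb.card ≤ D := le_trans (Finset.card_le_card hFbsub) (hE e he)
    have hcol : ∃ col : Fin (D + 1), col ∉ Fb.image c := by
      by_contra h
      push_neg at h
      have h2 : (Finset.univ : Finset (Fin (D+1))) ⊆ Fb.image c := fun a _ => h a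
      have := Finset.card_le_card h2
      simp only [Finset.card_univ, Fintype.card_fin] at this
      have := Finset.card_image_le (s := Fb) (f := c)
      omega
    obtain ⟨col, hcol⟩ := hcol
    refine ⟨Function.update c e col, ?_⟩
    intro a ha b hb hab hint
    by_cases hae : a = e
    · have hbe : b ≠ e := by rw [hae] at hab; exact fun h => hab h.symm
      rw [hae, Function.update_self, Function.update_of_ne hbe]
      intro hcb
      refine hcol (Finset.mem_image.mpr ⟨b, Finset.mem_filter.mpr ⟨Finset.mem_erase.mpr ⟨hbe, hb⟩, ?_⟩, hcb.symm⟩)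
      rw [hae] at hint; rwa [Finset.inter_comm] at hint
    · by_cases hbe : b = e
      · rw [hbe, Function.update_self, Function.update_of_ne hae]
        intro hca
        refine hcol (Finset.mem_image.mpr ⟨a, Finset.mem_filter.mpr ⟨Finset.mem_erase.mpr ⟨hae, ha⟩, ?_⟩, hca⟩)
        rwa [hbe] at hint
      · rw [Function.update_of_ne hae, Function.update_of_ne hbe]
        exact hc a (Finset.mem_erase.mpr ⟨hae, ha⟩) b (Finset.mem_erase.mpr ⟨hbe, hb⟩) hab hint

lemma star_bound [Fintype V] [DecidableEq V] (E : Finset (Finset V)) (hlin : Linear E)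
    {e : Finset V} (he : e ∈ E) {y : V} (hy : y ∈ e) :
    ((E.filter fun f => f ≠ e ∧ y ∈ f ∧ e.card ≤ f.card).card + 1) * (e.card - 1) ≤
      deg2 E y := by
  set T := E.filter fun f => f ≠ e ∧ y ∈ f ∧ e.card ≤ f.card with hT
  have heT : e ∉ T := by simp [hT]
  set F := insert e T with hF
  have hFcard : F.card = T.card + 1 := Finset.card_insert_of_notMem heT
  have hmemF : ∀ f ∈ F, f ∈ E ∧ y ∈ f ∧ e.card ≤ f.card := by
    intro f hf
    rcases Finset.mem_insert.mp hf with rfl | hf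
    · exact ⟨he, hy, le_refl _⟩
    · have := Finset.mem_filter.mp hf
      exact ⟨this.1, this.2.2.1, this.2.2.2⟩
  have hdisj : ∀ f ∈ F, ∀ g ∈ F, f ≠ g → Disjoint (f.erase y) (g.erase y) := by
    intro f hf g hg hfg
    rw [Finset.disjoint_left]
    intro z hzf hzg
    obtain ⟨hzf1, hzf2⟩ := Finset.mem_erase.mp hzf
    obtain ⟨hzg1, hzg2⟩ := Finset.mem_erase.mp hzg
    have hsub : ({y, z} : Finset V) ⊆ f ∩ g := by
      intro w hw
      rcases Finset.mem_insert.mp hw with rfl | hw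
      · exact Finset.mem_inter.mpr ⟨(hmemF f hf).2.1, (hmemF g hg).2.1⟩
      · rw [Finset.mem_singleton] at hw
        subst hw
        exact Finset.mem_inter.mpr ⟨hzf2, hzg2⟩
    have h2 : ({y, z} : Finset V).card = 2 := by
      rw [Finset.card_insert_of_notMem (by simpa using (Ne.symm hzf1)), Finset.card_singleton]
    have := Finset.card_le_card hsub
    have := hlin f (hmemF f hf).1 g (hmemF g hg).1 hfg
    omega
  have hsum : (F.biUnion fun f => f.erase y).card = ∑ f ∈ F, (f.erase y).card :=
    Finset.card_biUnion hdisj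
  have hsub : (F.biUnion fun f => f.erase y) ⊆
      Finset.univ.filter fun z => z ≠ y ∧ ∃ g ∈ E, y ∈ g ∧ z ∈ g := by
    intro z hz
    obtain ⟨f, hf, hzf⟩ := Finset.mem_biUnion.mp hz
    obtain ⟨hz1, hz2⟩ := Finset.mem_erase.mp hzf
    exact Finset.mem_filter.mpr ⟨Finset.mem_univ z, hz1, f, (hmemF f hf).1, (hmemF f hf).2.1, hz2⟩
  have hlow : F.card * (e.card - 1) ≤ ∑ f ∈ F, (f.erase y).card := by
    have := Finset.card_nsmul_le_sum F (fun f => (f.erase y).card) (e.card - 1)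
      (fun f hf => by
        show e.card - 1 ≤ (f.erase y).card
        rw [Finset.card_erase_of_mem (hmemF f hf).2.1]
        exact Nat.sub_le_sub_right (hmemF f hf).2.2 1)
    simpa using this
  calc (T.card + 1) * (e.card - 1) = F.card * (e.card - 1) := by rw [hFcard]
    _ ≤ ∑ f ∈ F, (f.erase y).card := hlow
    _ = (F.biUnion fun f => f.erase y).card := hsum.symm
    _ ≤ deg2 E y := Finset.card_le_card hsub

lemma forbidden_bound [Fintype V] [DecidableEq V] (E : Finset (Finset V)) (hlin : Linear E)
    (hcond : ∀ e ∈ E, ∃ x ∈ e, hyperDeg E x ≤ e.card) :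
    ∀ e ∈ E, (E.filter fun f => f ≠ e ∧ (f ∩ e).Nonempty ∧ e.card ≤ f.card).card ≤ maxDeg2 E := by
  intro e he
  obtain ⟨x, hx, hdx⟩ := hcond e he
  set D := maxDeg2 E with hD
  set T : V → Finset (Finset V) := fun y => E.filter fun f => f ≠ e ∧ y ∈ f ∧ e.card ≤ f.card
    with hTdef
  have hmax : ∀ y : V, deg2 E y ≤ D := fun y => Finset.le_sup (Finset.mem_univ y)
  -- the forbidden set is covered by the stars at vertices of e
  have hcover : (E.filter fun f => f ≠ e ∧ (f ∩ e).Nonempty ∧ e.card ≤ f.card) ⊆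
      e.biUnion T := by
    intro f hf
    obtain ⟨hfE, hne, ⟨z, hz⟩, hcard⟩ := Finset.mem_filter.mp hf
    obtain ⟨hzf, hze⟩ := Finset.mem_inter.mp hz
    exact Finset.mem_biUnion.mpr ⟨z, hze, Finset.mem_filter.mpr ⟨hfE, hne, hzf, hcard⟩⟩
  have hstep1 : (E.filter fun f => f ≠ e ∧ (f ∩ e).Nonempty ∧ e.card ≤ f.card).card ≤
      ∑ y ∈ e, (T y).card :=
    le_trans (Finset.card_le_card hcover) (Finset.card_biUnion_le)
  -- bound at the special vertex x
  have hTx : (T x).card ≤ e.card - 1 := by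
    have hsub : T x ⊆ (E.filter fun f => x ∈ f).erase e := by
      intro f hf
      obtain ⟨hfE, hne, hxf, _⟩ := Finset.mem_filter.mp hf
      exact Finset.mem_erase.mpr ⟨hne, Finset.mem_filter.mpr ⟨hfE, hxf⟩⟩
    have hmem : e ∈ E.filter fun f => x ∈ f := Finset.mem_filter.mpr ⟨he, hx⟩
    have h1 : (T x).card ≤ (E.filter fun f => x ∈ f).card - 1 := by
      have := Finset.card_le_card hsub
      rwa [Finset.card_erase_of_mem hmem] at this
    have h2 : 1 ≤ (E.filter fun f => x ∈ f).card := Finset.card_pos.mpr ⟨e, hmem⟩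
    have h3 : (E.filter fun f => x ∈ f).card ≤ e.card := hdx
    omega
  -- bound at the other vertices
  set q := D / (e.card - 1) with hq
  have hTy : ∀ y ∈ e.erase x, (T y).card ≤ q - 1 := by
    intro y hy
    obtain ⟨hyx, hye⟩ := Finset.mem_erase.mp hy
    have hk2 : 2 ≤ e.card := by
      have hsub : ({x, y} : Finset V) ⊆ e := by
        intro w hw
        rcases Finset.mem_insert.mp hw with rfl | hw
        · exact hx
        · rw [Finset.mem_singleton] at hw; subst hw; exact hye
      have h2 : ({x, y} : Finset V).card = 2 := by
        rw [Finset.card_insert_of_notMem (by simpa using (Ne.symm hyx)), Finset.card_singleton]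
      have := Finset.card_le_card hsub
      omega
    have hsb := star_bound E hlin he hye
    have hle : ((T y).card + 1) * (e.card - 1) ≤ D := le_trans hsb (hmax y)
    have hpos : 0 < e.card - 1 := by omega
    have : (T y).card + 1 ≤ q := (Nat.le_div_iff_mul_le hpos).mpr hle
    omega
  have hsum2 : ∑ y ∈ e.erase x, (T y).card ≤ (e.card - 1) * (q - 1) := by
    have := Finset.sum_le_card_nsmul (e.erase x) (fun y => (T y).card) (q - 1) hTy
    rw [Finset.card_erase_of_mem hx] at this
    simpa using this
  -- k - 1 ≤ D
  have hkD : e.card - 1 ≤ D := by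
    have hsb := le_trans (star_bound E hlin he hx) (hmax x)
    exact le_trans (Nat.le_mul_of_pos_left _ (Nat.succ_pos _)) hsb
  have h5 : (e.card - 1) * (q - 1) + (e.card - 1) ≤ D := by
    rcases q with _ | q'
    · simpa using hkD
    · have h3 : (q' + 1) * (e.card - 1) ≤ D := by
        rw [hq]
        exact Nat.div_mul_le_self D (e.card - 1)
      calc (e.card - 1) * (q' + 1 - 1) + (e.card - 1)
          = (e.card - 1) * q' + (e.card - 1) := by simp
        _ = (q' + 1) * (e.card - 1) := by ring
        _ ≤ D := h3
  have hsplit : ∑ y ∈ e, (T y).card = (T x).card + ∑ y ∈ e.erase x, (T y).card :=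
    (Finset.add_sum_erase e (fun y => (T y).card) hx).symm
  calc (E.filter fun f => f ≠ e ∧ (f ∩ e).Nonempty ∧ e.card ≤ f.card).card
      ≤ ∑ y ∈ e, (T y).card := hstep1
    _ = (T x).card + ∑ y ∈ e.erase x, (T y).card := hsplit
    _ ≤ (e.card - 1) + (e.card - 1) * (q - 1) := add_le_add hTx hsum2
    _ = (e.card - 1) * (q - 1) + (e.card - 1) := add_comm _ _
    _ ≤ D := h5

theorem stmt0 {V : Type*} [Fintype V] [DecidableEq V] (E : Finset (Finset V))
    (hlin : Linear E)
    (hcond : ∀ e ∈ E, ∃ x ∈ e, hyperDeg E x ≤ e.card) :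
    chromIndex E ≤ maxDeg2 E + 1 := by
  exact Nat.sInf_le (greedy (maxDeg2 E) E (forbidden_bound E hlin hcond))
end

section
/- Let H = (V,E) be a finite linear hypergraph whose antirank satisfies ar(H) ≥ |V|^{1/2} (equivalently, ar(H)² ≥ |V|). Then the chromatic index of H satisfies q(H) ≤ Δ([H]_2) + 1. -/
open Finset

variable {V : Type*}

/-!
Colour the edges greedily, largest first. When an edge `e` of minimum size among those left
has more than `Δ = Δ([H]₂)` neighbours among them, double counting
`∑_{x ∈ e} deg₂ x = |e|(|e| - 1) + ∑_{a ∼ e} (|a| - 1) ≤ |e| Δ`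
gives `|e|² ≤ Δ + 1 ≤ |V| ≤ ar(H)² ≤ |e|²`, so everything is tight: `|V| = |e|² = Δ + 1`, every
point of `e` is adjacent to all of `V`, and every neighbour of `e` has size `|e|`. In this
affine-plane-like configuration the edges missing `e` are pairwise disjoint and two neighbours of
`e` are disjoint; giving those two one colour and the other neighbours distinct colours leaves a
colour for `e` and all edges missing `e`.
-/

def edgeNeighbors [DecidableEq V] (E : Finset (Finset V)) (e : Finset V) : Finset (Finset V) :=
  {a ∈ E | a ≠ e ∧ (a ∩ e).Nonempty}

section Linear

variable [DecidableEq V] {E F : Finset (Finset V)} {a b e : Finset V} {x y : V}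

theorem edgeDeg_eq_card_edgeNeighbors : edgeDeg E e = #(edgeNeighbors E e) := rfl

theorem Linear.mono (hE : Linear E) (hF : F ⊆ E) : Linear F :=
  fun a ha b hb => hE a (hF ha) b (hF hb)

theorem Linear.eq_of_mem_of_mem (hE : Linear E) (ha : a ∈ E) (hb : b ∈ E)
    (hxa : x ∈ a) (hxb : x ∈ b) (hya : y ∈ a) (hyb : y ∈ b) (hxy : x ≠ y) : a = b := by
  by_contra hab
  exact hxy (card_le_one.1 (hE a ha b hb hab) x (mem_inter.2 ⟨hxa, hxb⟩) y (mem_inter.2 ⟨hya, hyb⟩))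

theorem Linear.card_inter_eq_one (hE : Linear E) (ha : a ∈ E) (hb : b ∈ E) (hab : a ≠ b)
    (h : (a ∩ b).Nonempty) : #(a ∩ b) = 1 :=
  le_antisymm (hE a ha b hb hab) h.card_pos

theorem Linear.card_le_card_filter_meet (hE : Linear E) (he : e ∈ E) (hx : x ∉ e)
    (hadj : ∀ y ∈ e, ∃ a ∈ E, y ∈ a ∧ x ∈ a) : #e ≤ #{a ∈ E | x ∈ a ∧ (a ∩ e).Nonempty} := by
  set S := {a ∈ E | x ∈ a ∧ (a ∩ e).Nonempty}
  have hcover : e ⊆ S.biUnion (· ∩ e) := fun y hy => by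
    obtain ⟨a, ha, hya, hxa⟩ := hadj y hy
    exact mem_biUnion.2 ⟨a, mem_filter.2 ⟨ha, hxa, y, mem_inter.2 ⟨hya, hy⟩⟩, mem_inter.2 ⟨hya, hy⟩⟩
  calc #e ≤ ∑ a ∈ S, #(a ∩ e) := (card_le_card hcover).trans card_biUnion_le
    _ ≤ ∑ _a ∈ S, 1 := sum_le_sum fun a ha => by
      obtain ⟨haE, hxa, -⟩ := mem_filter.1 ha
      exact hE a haE e he fun hae => hx (hae ▸ hxa)
    _ = #S := (card_eq_sum_ones S).symm

theorem Linear.exists_disjoint_of_card_lt_hyperDeg (hE : Linear E) (hy : y ∉ b)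
    (h : #b < hyperDeg E y) : ∃ a ∈ E, y ∈ a ∧ Disjoint a b := by
  by_contra! hmeet
  have hdisj : (({a ∈ E | y ∈ a} : Finset _) : Set (Finset V)).PairwiseDisjoint (· ∩ b) := by
    intro a ha a' ha' haa'
    rw [coe_filter] at ha ha'
    refine disjoint_left.2 fun z hz hz' => ?_
    rw [mem_inter] at hz hz'
    exact haa' (hE.eq_of_mem_of_mem ha.1 ha'.1 hz.1 hz'.1 ha.2 ha'.2 fun hzy => hy (hzy ▸ hz.2))
  have hne : ∀ a ∈ {a ∈ E | y ∈ a}, (a ∩ b).Nonempty := fun a ha =>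
    not_disjoint_iff_nonempty_inter.1 (hmeet a (mem_filter.1 ha).1 (mem_filter.1 ha).2)
  have hsub : {a ∈ E | y ∈ a}.biUnion (· ∩ b) ⊆ b := biUnion_subset.2 fun _ _ => inter_subset_right
  exact h.not_ge ((card_le_card_biUnion hdisj hne).trans (card_le_card hsub))

end Linear

section Coloring

variable [DecidableEq V] {E : Finset (Finset V)} {e : Finset V} {q r : ℕ}

theorem ColorableWith.of_le (h : ColorableWith E q) (hqr : q ≤ r) : ColorableWith E r := by
  obtain ⟨c, hc⟩ := h
  exact ⟨fun a => Fin.castLE hqr (c a), fun a ha b hb hab hmeet hcab =>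
    hc a ha b hb hab hmeet (Fin.castLE_injective hqr hcab)⟩

theorem colorableWith_card {α : Type*} [Fintype α] (c : Finset V → α)
    (hc : ∀ a ∈ E, ∀ b ∈ E, a ≠ b → (a ∩ b).Nonempty → c a ≠ c b) :
    ColorableWith E (Fintype.card α) :=
  ⟨Fintype.equivFin α ∘ c, fun a ha b hb hab hmeet hcab =>
    hc a ha b hb hab hmeet ((Fintype.equivFin α).injective hcab)⟩

theorem ColorableWith.of_erase (h : ColorableWith (E.erase e) q) (he : edgeDeg E e < q) :
    ColorableWith E q := by
  obtain ⟨c, hc⟩ := h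
  obtain ⟨γ, hγ⟩ : ∃ γ : Fin q, γ ∉ (edgeNeighbors E e).image c := by
    by_contra! hall
    have := (card_le_card fun γ (_ : γ ∈ univ) => hall γ).trans card_image_le
    rw [card_univ, Fintype.card_fin] at this
    exact he.not_ge this
  have hfree : ∀ a ∈ E, a ≠ e → (a ∩ e).Nonempty → c a ≠ γ := fun a ha hae hmeet hca =>
    hγ (hca ▸ mem_image_of_mem c (mem_filter.2 ⟨ha, hae, hmeet⟩))
  refine ⟨Function.update c e γ, fun a ha b hb hab hmeet => ?_⟩
  by_cases hae : a = e
  · subst hae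
    rw [Function.update_self, Function.update_of_ne hab.symm]
    exact (hfree b hb hab.symm (inter_comm a b ▸ hmeet)).symm
  by_cases hbe : b = e
  · subst hbe
    rw [Function.update_self, Function.update_of_ne hab]
    exact hfree a ha hab hmeet
  rw [Function.update_of_ne hae, Function.update_of_ne hbe]
  exact hc a (mem_erase.2 ⟨hae, ha⟩) b (mem_erase.2 ⟨hbe, hb⟩) hab hmeet

theorem colorableWith_of_forall_subset_exists_edgeDeg_lt (hq : 0 < q)
    (h : ∀ F ⊆ E, F.Nonempty → ¬ColorableWith F q → ∃ e ∈ F, edgeDeg F e < q) :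
    ColorableWith E q := by
  induction E using Finset.strongInduction with
  | H E ih =>
    by_contra hE
    obtain rfl | hne := E.eq_empty_or_nonempty
    · exact hE ⟨fun _ => ⟨0, hq⟩, by simp⟩
    obtain ⟨e, he, hlt⟩ := h E subset_rfl hne hE
    refine hE (ColorableWith.of_erase ?_ hlt)
    exact ih _ (erase_ssubset he) fun F hF => h F (hF.trans (erase_subset e E))

/-- `h` takes the colour of `b`; its own colour is then free for `e` and the edges missing `e`. -/
theorem colorableWith_edgeDeg_of_disjoint {b h : Finset V} (hb : b ∈ edgeNeighbors E e)
    (hh : h ∈ edgeNeighbors E e) (hhb : Disjoint h b)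
    (hpar : ∀ a₁ ∈ E, ∀ a₂ ∈ E, a₁ ≠ a₂ → Disjoint a₁ e → Disjoint a₂ e → Disjoint a₁ a₂) :
    ColorableWith E (edgeDeg E e) := by
  set N := edgeNeighbors E e
  have hbh : b ≠ h := fun hbh => by
    obtain ⟨x, hx⟩ := (mem_filter.1 hb).2.2
    exact disjoint_left.1 hhb (hbh ▸ (mem_inter.1 hx).1) (mem_inter.1 hx).1
  have hout : ∀ a ∈ E, a ∉ N → a = e ∨ Disjoint a e := fun a ha haN => by
    by_contra! hae
    exact haN (mem_filter.2 ⟨ha, hae.1, not_disjoint_iff_nonempty_inter.1 hae.2⟩)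
  let r : Finset V → Finset V := fun a => if a = h then b else if a ∈ N then a else h
  have hrN : ∀ a, r a ∈ N := fun a => by
    simp only [r]
    split_ifs <;> assumption
  have := colorableWith_card (E := E) (fun a => (⟨r a, hrN a⟩ : N))
    fun a₁ ha₁ a₂ ha₂ hne hmeet hr => by
    have hmeet' : ¬Disjoint a₁ a₂ := not_disjoint_iff_nonempty_inter.2 hmeet
    have houtside : a₁ ∉ N → a₂ ∉ N → False := fun h₁ h₂ => by
      rcases hout a₁ ha₁ h₁ with rfl | h₁e <;> rcases hout a₂ ha₂ h₂ with rfl | h₂e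
      exacts [hne rfl, hmeet' h₂e.symm, hmeet' h₁e, hmeet' (hpar a₁ ha₁ a₂ ha₂ hne h₁e h₂e)]
    have hr' : r a₁ = r a₂ := congrArg Subtype.val hr
    simp only [r] at hr'
    split_ifs at hr' <;> subst_vars <;>
      first
      | exact hne rfl | exact hbh rfl | exact hmeet' hhb | exact hmeet' hhb.symm
      | contradiction | exact houtside ‹_› ‹_›
  rwa [Fintype.card_coe] at this

end Coloring

section Deg2

variable [Fintype V] [DecidableEq V] {E F : Finset (Finset V)} {e : Finset V} {x y : V}

theorem Linear.deg2_eq_sum (hE : Linear E) (x : V) :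
    deg2 E x = ∑ a ∈ E with x ∈ a, (#a - 1) := by
  have hunion : univ.filter (fun y => y ≠ x ∧ ∃ e ∈ E, x ∈ e ∧ y ∈ e) =
      {a ∈ E | x ∈ a}.biUnion (·.erase x) := by
    ext y
    simp only [mem_filter, mem_univ, true_and, mem_biUnion, mem_erase]
    grind
  rw [deg2, hunion, card_biUnion]
  · exact sum_congr rfl fun a ha => card_erase_of_mem (mem_filter.1 ha).2
  · intro a ha b hb hab
    rw [coe_filter] at ha hb
    rw [Function.onFun, disjoint_left]
    intro y hya hyb
    rw [mem_erase] at hya hyb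
    exact hab (hE.eq_of_mem_of_mem ha.1 hb.1 hya.2 hyb.2 ha.2 hb.2 hya.1)

theorem deg2_lt_card (E : Finset (Finset V)) (x : V) : deg2 E x < Fintype.card V :=
  card_lt_univ_of_notMem (x := x) (by simp)

theorem deg2_mono (h : F ⊆ E) (x : V) : deg2 F x ≤ deg2 E x :=
  card_le_card <| monotone_filter_right _ fun _ _ ⟨hy, a, ha, hxa⟩ => ⟨hy, a, h ha, hxa⟩

theorem deg2_le_maxDeg2 (E : Finset (Finset V)) (x : V) : deg2 E x ≤ maxDeg2 E :=
  le_sup (mem_univ x)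

theorem maxDeg2_mono (h : F ⊆ E) : maxDeg2 F ≤ maxDeg2 E :=
  sup_mono_fun fun x _ => deg2_mono h x

theorem maxDeg2_lt_card [Nonempty V] (E : Finset (Finset V)) : maxDeg2 E < Fintype.card V :=
  (Finset.sup_lt_iff Fintype.card_pos).2 fun x _ => deg2_lt_card E x

theorem exists_mem_mem_of_card_le_deg2_add_one (h : Fintype.card V ≤ deg2 E x + 1) (hyx : y ≠ x) :
    ∃ a ∈ E, x ∈ a ∧ y ∈ a := by
  have hsub : univ.filter (fun y => y ≠ x ∧ ∃ e ∈ E, x ∈ e ∧ y ∈ e) ⊆ univ.erase x :=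
    fun y hy => mem_erase.2 ⟨(mem_filter.1 hy).2.1, mem_univ y⟩
  have heq := eq_of_subset_of_card_le hsub <| by
    rw [card_erase_of_mem (mem_univ x), card_univ]; exact Nat.sub_le_of_le_add h
  have hy : y ∈ univ.erase x := mem_erase.2 ⟨hyx, mem_univ y⟩
  rw [← heq] at hy
  exact (mem_filter.1 hy).2.2

theorem Linear.hyperDeg_mul_le_deg2 {k : ℕ} (hE : Linear E) (hk : ∀ a ∈ E, k ≤ #a) (x : V) :
    hyperDeg E x * (k - 1) ≤ deg2 E x := by
  rw [hE.deg2_eq_sum, hyperDeg, ← smul_eq_mul]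
  exact card_nsmul_le_sum _ _ _ fun a ha => Nat.sub_le_sub_right (hk a (mem_filter.1 ha).1) 1

theorem Linear.deg2_le_hyperDeg_mul {k : ℕ} (hE : Linear E) (hk : ∀ a ∈ E, x ∈ a → #a ≤ k) :
    deg2 E x ≤ hyperDeg E x * (k - 1) := by
  rw [hE.deg2_eq_sum, hyperDeg, ← smul_eq_mul]
  exact sum_le_card_nsmul _ _ _ fun a ha =>
    Nat.sub_le_sub_right (hk a (mem_filter.1 ha).1 (mem_filter.1 ha).2) 1

theorem Linear.sum_deg2_eq (hE : Linear E) (he : e ∈ E) :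
    ∑ x ∈ e, deg2 E x = #e * (#e - 1) + ∑ a ∈ edgeNeighbors E e, (#a - 1) := by
  have hswap : ∑ x ∈ e, deg2 E x = ∑ a ∈ E, #(a ∩ e) * (#a - 1) := by
    simp only [hE.deg2_eq_sum, sum_filter]
    rw [sum_comm]
    refine sum_congr rfl fun a _ => ?_
    rw [← sum_filter, sum_const, smul_eq_mul, filter_mem_eq_inter, inter_comm]
  have hneighbor : ∀ a ∈ E.erase e, #(a ∩ e) * (#a - 1) =
      if a ≠ e ∧ (a ∩ e).Nonempty then #a - 1 else 0 := by
    intro a ha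
    obtain ⟨hae, haE⟩ := mem_erase.1 ha
    by_cases hmeet : (a ∩ e).Nonempty
    · simp [hae, hmeet, hE.card_inter_eq_one haE he hae hmeet]
    · simp [not_nonempty_iff_eq_empty.1 hmeet]
  rw [hswap, ← add_sum_erase E _ he, inter_self, sum_congr rfl hneighbor, ← sum_filter,
    edgeNeighbors, filter_erase, erase_eq_of_notMem (fun h => (mem_filter.1 h).2.1 rfl)]

/-- A common point of `a₁` and `a₂` would lie on them and on an edge through each point of `e`. -/
theorem Linear.disjoint_of_disjoint_edge {k : ℕ} {a₁ a₂ : Finset V} (hE : Linear E)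
    (hk : ∀ a ∈ E, k ≤ #a) (he : e ∈ E) (hcov : ∀ x ∈ e, Fintype.card V ≤ deg2 E x + 1)
    (hcard : Fintype.card V ≤ (#e + 2) * (k - 1)) (ha₁ : a₁ ∈ E) (ha₂ : a₂ ∈ E) (hne : a₁ ≠ a₂)
    (h₁ : Disjoint a₁ e) (h₂ : Disjoint a₂ e) : Disjoint a₁ a₂ := by
  by_contra hmeet
  obtain ⟨v, hv₁, hv₂⟩ := not_disjoint_iff.1 hmeet
  have hve : v ∉ e := disjoint_left.1 h₁ hv₁
  set S := {a ∈ E | v ∈ a ∧ (a ∩ e).Nonempty}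
  have hS : #e ≤ #S := hE.card_le_card_filter_meet he hve fun x hx =>
    exists_mem_mem_of_card_le_deg2_add_one (hcov x hx) fun hvx => hve (hvx ▸ hx)
  have hnotS : ∀ a, Disjoint a e → a ∉ S := fun a hae haS =>
    not_disjoint_iff_nonempty_inter.2 (mem_filter.1 haS).2.2 hae
  have hstar : insert a₁ (insert a₂ S) ⊆ {a ∈ E | v ∈ a} := by
    simp only [insert_subset_iff]
    exact ⟨mem_filter.2 ⟨ha₁, hv₁⟩, mem_filter.2 ⟨ha₂, hv₂⟩,
      monotone_filter_right _ fun _ _ h => h.1⟩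
  have hdeg : #e + 2 ≤ hyperDeg E v := by
    have := card_le_card hstar
    rw [card_insert_of_notMem (by simpa [hne] using hnotS a₁ h₁),
      card_insert_of_notMem (hnotS a₂ h₂)] at this
    rw [hyperDeg]
    omega
  have := (Nat.mul_le_mul_right (k - 1) hdeg).trans (hE.hyperDeg_mul_le_deg2 hk v)
  have := deg2_lt_card E v
  omega

theorem Linear.exists_disjoint_edgeNeighbors (hE : Linear E) (he : e ∈ E) (he2 : 2 ≤ #e)
    (hV : Fintype.card V = #e ^ 2) (hcov : ∀ x ∈ e, Fintype.card V ≤ deg2 E x + 1)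
    (hsize : ∀ a ∈ edgeNeighbors E e, #a = #e) :
    ∃ b ∈ edgeNeighbors E e, ∃ h ∈ edgeNeighbors E e, Disjoint h b := by
  obtain ⟨j, hj⟩ : ∃ j, #e = j + 2 := ⟨#e - 2, by omega⟩
  obtain ⟨x, hx⟩ : e.Nonempty := card_pos.1 (by omega)
  obtain ⟨v, hv⟩ : ∃ v, v ∉ e := by
    by_contra! hall
    have := card_le_card fun v (_ : v ∈ univ) => hall v
    rw [card_univ, hV] at this
    nlinarith
  obtain ⟨b, hbE, hxb, hvb⟩ :=
    exists_mem_mem_of_card_le_deg2_add_one (hcov x hx) fun hvx : v = x => hv (hvx ▸ hx)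
  have hbe : b ≠ e := fun hbe => hv (hbe ▸ hvb)
  have hbN : b ∈ edgeNeighbors E e := mem_filter.2 ⟨hbE, hbe, x, mem_inter.2 ⟨hxb, hx⟩⟩
  obtain ⟨y, hye, hyx⟩ := exists_mem_ne he2 x
  have hyb : y ∉ b := fun hyb => hbe (hE.eq_of_mem_of_mem hbE he hyb hye hxb hx hyx)
  -- `y` lies on `|e| + 1` edges, all of size `|e|`, so one of them misses `b`.
  have hstar : #b < hyperDeg E y := by
    have hle : deg2 E y ≤ hyperDeg E y * (#e - 1) := hE.deg2_le_hyperDeg_mul fun a ha hya => by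
      by_cases hae : a = e
      · rw [hae]
      · exact (hsize a (mem_filter.2 ⟨ha, hae, y, mem_inter.2 ⟨hya, hye⟩⟩)).le
    have := hcov y hye
    rw [hsize b hbN]
    by_contra! hr
    rw [show #e - 1 = j + 1 by omega] at hle
    rw [hj] at hV hr
    have := Nat.mul_le_mul_right (j + 1) hr
    nlinarith
  obtain ⟨h, hhE, hyh, hhb⟩ := hE.exists_disjoint_of_card_lt_hyperDeg hyb hstar
  have hhe : h ≠ e := fun hhe => disjoint_left.1 hhb (hhe ▸ hx) hxb
  exact ⟨b, hbN, h, mem_filter.2 ⟨hhE, hhe, y, mem_inter.2 ⟨hyh, hye⟩⟩, hhb⟩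

theorem Linear.colorableWith_edgeDeg_of_card_eq_sq (hE : Linear E) (he : e ∈ E)
    (hmin : ∀ a ∈ E, #e ≤ #a) (he2 : 2 ≤ #e) (hV : Fintype.card V = #e ^ 2)
    (hcov : ∀ x ∈ e, Fintype.card V ≤ deg2 E x + 1) (hsize : ∀ a ∈ edgeNeighbors E e, #a = #e) :
    ColorableWith E (edgeDeg E e) := by
  obtain ⟨b, hb, h, hh, hhb⟩ := hE.exists_disjoint_edgeNeighbors he he2 hV hcov hsize
  refine colorableWith_edgeDeg_of_disjoint hb hh hhb fun a₁ ha₁ a₂ ha₂ =>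
    hE.disjoint_of_disjoint_edge hmin he hcov ?_ ha₁ ha₂
  obtain ⟨j, hj⟩ : ∃ j, #e = j + 2 := ⟨#e - 2, by omega⟩
  rw [hV, show #e - 1 = j + 1 by omega, hj]
  nlinarith

theorem one_lt_card_of_edgeDeg_pos (h : 0 < edgeDeg E e) : 1 < Fintype.card V := by
  obtain ⟨a, ha⟩ := card_pos.1 h
  obtain ⟨-, hae, x, hx⟩ := mem_filter.1 ha
  by_contra! hV
  have : Subsingleton V := Fintype.card_le_one_iff_subsingleton.1 hV
  refine hae (ext fun z => ?_)
  rw [Subsingleton.elim z x]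
  exact ⟨fun _ => (mem_inter.1 hx).2, fun _ => (mem_inter.1 hx).1⟩

theorem Linear.colorableWith_of_maxDeg2_lt_edgeDeg {k : ℕ} (hE : Linear E)
    (hk : ∀ a ∈ E, k ≤ #a) (hV : Fintype.card V ≤ k ^ 2) (he : e ∈ E) (hmin : ∀ a ∈ E, #e ≤ #a)
    (hlt : maxDeg2 E < edgeDeg E e) : ColorableWith E (maxDeg2 E + 1) := by
  set D := maxDeg2 E
  -- With `|V| ≤ k ^ 2 ≤ #e ^ 2`, the bounds `hupper` and `hlower` on `hsum` are equalities.
  have hV1 := one_lt_card_of_edgeDeg_pos (Nat.zero_lt_of_lt hlt)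
  have : Nonempty V := Fintype.card_pos_iff.1 (by omega)
  have hDV : D < Fintype.card V := maxDeg2_lt_card E
  have hke : k ≤ #e := hk e he
  have hk2 : 2 ≤ k := by nlinarith
  obtain ⟨j, hj⟩ : ∃ j, #e = j + 1 := ⟨#e - 1, by omega⟩
  have hkj : k ^ 2 ≤ (j + 1) ^ 2 := hj ▸ Nat.pow_le_pow_left hke 2
  have hneighbor : ∀ a ∈ edgeNeighbors E e, #e - 1 ≤ #a - 1 := fun a ha =>
    Nat.sub_le_sub_right (hmin a (mem_filter.1 ha).1) 1
  have hupper : ∑ x ∈ e, deg2 E x ≤ ∑ _x ∈ e, D := sum_le_sum fun x _ => deg2_le_maxDeg2 E x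
  have hlower := sum_le_sum hneighbor
  have hsum := hE.sum_deg2_eq he
  rw [sum_const, smul_eq_mul] at hupper hlower
  rw [edgeDeg_eq_card_edgeNeighbors] at hlt
  rw [show #e - 1 = j by omega] at hlower hsum
  rw [hj] at hupper hsum
  have hNj := Nat.mul_le_mul_right j hlt
  have hD : D + 1 = (j + 1) ^ 2 := by nlinarith
  have hN : #(edgeNeighbors E e) = D + 1 :=
    le_antisymm (Nat.le_of_mul_le_mul_right (c := j) (by nlinarith) (by omega)) hlt
  have hdeg : ∀ x ∈ e, deg2 E x = D := (sum_eq_sum_iff_of_le fun x _ => deg2_le_maxDeg2 E x).1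
    (by rw [sum_const, smul_eq_mul, hj]; nlinarith)
  have hsize : ∀ a ∈ edgeNeighbors E e, #a = #e := fun a ha => by
    have := (sum_eq_sum_iff_of_le hneighbor).1
      (by rw [sum_const, smul_eq_mul, show #e - 1 = j by omega]; nlinarith) a ha
    have := hmin a (mem_filter.1 ha).1
    omega
  have := hE.colorableWith_edgeDeg_of_card_eq_sq he hmin (by omega) (by rw [hj]; omega)
    (fun x hx => by rw [hdeg x hx]; omega) hsize
  rwa [edgeDeg_eq_card_edgeNeighbors, hN] at this

end Deg2

theorem stmt1_general {V : Type*} [Fintype V] [DecidableEq V] (E : Finset (Finset V)) (k : ℕ)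
    (hlin : Linear E)
    (hk_le : ∀ e ∈ E, k ≤ e.card)
    (har : Fintype.card V ≤ k ^ 2) :
    chromIndex E ≤ maxDeg2 E + 1 := by
  refine Nat.sInf_le (colorableWith_of_forall_subset_exists_edgeDeg_lt (Nat.succ_pos _) ?_)
  intro F hF hFne hFcol
  obtain ⟨e, he, hmin⟩ := F.exists_min_image card hFne
  refine ⟨e, he, Nat.lt_succ_of_le (not_lt.1 fun hlt => hFcol ?_)⟩
  have hFE : maxDeg2 F ≤ maxDeg2 E := maxDeg2_mono hF
  exact ((hlin.mono hF).colorableWith_of_maxDeg2_lt_edgeDeg (fun a ha => hk_le a (hF ha)) har he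
    hmin (hFE.trans_lt hlt)).of_le (Nat.succ_le_succ hFE)

theorem stmt1 {V : Type*} [Fintype V] [DecidableEq V] (E : Finset (Finset V)) (k : ℕ)
    (hlin : Linear E) (hne : E.Nonempty)
    (hk_le : ∀ e ∈ E, k ≤ e.card) (hk_mem : ∃ e ∈ E, e.card = k)
    (har : Fintype.card V ≤ k ^ 2) :
    chromIndex E ≤ maxDeg2 E + 1 :=
  stmt1_general E k hlin hk_le har
end

section
/- Let H = (V,E) be a finite linear hypergraph with n = |V| vertices and antirank k = ar(H). If k² > n, then |E| · (k² − n) ≤ n(k − 1), i.e. |E| ≤ n(k−1)/(k²−n). -/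
open Finset

variable {V : Type*}

theorem stmt2 {V : Type*} [Fintype V] [DecidableEq V] (E : Finset (Finset V)) (n k : ℕ)
    (hn : n = Fintype.card V)
    (hlin : Linear E) (hne : E.Nonempty)
    (hk_le : ∀ e ∈ E, k ≤ e.card) (hk_mem : ∃ e ∈ E, e.card = k)
    (h : n < k ^ 2) :
    E.card * (k ^ 2 - n) ≤ n * (k - 1) := by
  classical
  set m := E.card with hm
  set d : V → ℕ := hyperDeg E with hd
  have hm1 : 1 ≤ m := hne.card_pos
  have hk1 : 1 ≤ k := by
    rcases Nat.eq_zero_or_pos k with rfl | hk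
    · simp at h
    · exact hk
  have hdeg : ∀ x, d x = ∑ e ∈ E, if x ∈ e then 1 else 0 := by
    intro x
    show (E.filter fun e => x ∈ e).card = _
    rw [Finset.card_filter]
  have hS : ∑ x, d x = ∑ e ∈ E, e.card := by
    simp only [hdeg]
    rw [Finset.sum_comm]
    refine Finset.sum_congr rfl fun e he => ?_
    simp [Finset.sum_boole, Finset.filter_univ_mem]
  have hkm : k * m ≤ ∑ x, d x := by
    rw [hS]
    calc k * m = ∑ _e ∈ E, k := by rw [Finset.sum_const, smul_eq_mul, mul_comm]
    _ ≤ ∑ e ∈ E, e.card := Finset.sum_le_sum hk_le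
  -- sum of squares of degrees
  have hsq : ∑ x, d x * d x ≤ (∑ x, d x) + m * (m - 1) := by
    have h1 : ∑ x, d x * d x = ∑ e ∈ E, ∑ f ∈ E, (e ∩ f).card := by
      have : ∀ x, d x * d x =
          ∑ e ∈ E, ∑ f ∈ E, (if x ∈ e then 1 else 0) * (if x ∈ f then 1 else 0) := by
        intro x; rw [hdeg, Finset.sum_mul_sum]
      simp only [this]
      rw [Finset.sum_comm]
      refine Finset.sum_congr rfl fun e he => ?_
      rw [Finset.sum_comm]
      refine Finset.sum_congr rfl fun f hf => ?_
      simp [ite_zero_mul_ite_zero, Finset.sum_boole, Finset.mem_inter,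
        Finset.filter_univ_mem]
      congr 1
      ext x
      simp [Finset.mem_inter]
      tauto
    rw [h1, hS]
    have hr : (∑ e ∈ E, e.card) + m * (m - 1) = ∑ e ∈ E, (e.card + (m - 1)) := by
      rw [Finset.sum_add_distrib, Finset.sum_const, smul_eq_mul, mul_comm]
    rw [hr]
    refine Finset.sum_le_sum fun e he => ?_
    rw [← Finset.add_sum_erase E _ he, Finset.inter_self]
    gcongr
    calc ∑ f ∈ E.erase e, (e ∩ f).card ≤ ∑ _f ∈ E.erase e, 1 := by
          refine Finset.sum_le_sum fun f hf => ?_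
          rw [Finset.inter_comm]
          exact hlin f (Finset.mem_of_mem_erase hf) e he (Finset.ne_of_mem_erase hf)
    _ = m - 1 := by rw [Finset.sum_const, smul_eq_mul, mul_one, Finset.card_erase_of_mem he]
  -- Cauchy-Schwarz over ℤ
  have hcs : ((∑ x, d x : ℕ) : ℤ) ^ 2 ≤ (n : ℤ) * ∑ x, (d x : ℤ) ^ 2 := by
    push_cast
    have := sq_sum_le_card_mul_sum_sq (s := (Finset.univ : Finset V))
      (f := fun x => (d x : ℤ))
    simpa [hn] using this
  set S := ∑ x, d x with hSdef
  have hsq' : (∑ x, (d x : ℤ) ^ 2) ≤ (S : ℤ) + (m : ℤ) * ((m : ℤ) - 1) := by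
    have := hsq
    have hc : ((m - 1 : ℕ) : ℤ) = (m : ℤ) - 1 := by
      rw [Nat.cast_sub hm1]; simp
    calc (∑ x, (d x : ℤ) ^ 2) = ((∑ x, d x * d x : ℕ) : ℤ) := by push_cast; simp only [sq]
    _ ≤ ((S + m * (m - 1) : ℕ) : ℤ) := by exact_mod_cast hsq
    _ = (S : ℤ) + (m : ℤ) * ((m : ℤ) - 1) := by push_cast [Nat.cast_sub hm1]; ring
  have B : ((S : ℤ)) ^ 2 ≤ (n : ℤ) * ((S : ℤ) + (m : ℤ) * ((m : ℤ) - 1)) := by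
    refine hcs.trans ?_
    have hn0 : (0 : ℤ) ≤ n := Int.natCast_nonneg n
    exact mul_le_mul_of_nonneg_left hsq' hn0
  have A : (k : ℤ) * (m : ℤ) ≤ (S : ℤ) := by exact_mod_cast hkm
  have hD : (n : ℤ) < (k : ℤ) ^ 2 := by exact_mod_cast h
  have hC : (1 : ℤ) ≤ (m : ℤ) := by exact_mod_cast hm1
  have hk0 : (0 : ℤ) ≤ k := Int.natCast_nonneg k
  have hn0 : (0 : ℤ) ≤ n := Int.natCast_nonneg n
  zify [h.le, hk1]
  rcases le_or_gt ((k : ℤ) * m) (n : ℤ) with hc | hc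
  · nlinarith [mul_le_mul_of_nonneg_right hc hk0, mul_le_mul_of_nonneg_left hC hn0]
  · have key : (0 : ℤ) ≤ ((S : ℤ) - k * m) * ((S : ℤ) + k * m - n) := by
      apply mul_nonneg
      · linarith
      · nlinarith
    nlinarith [key, B, hC, hc]
end

section
/- Let k ≥ 2 and let H = (V,E) be a hypergraph in the class ℋ_k, with e₀ the distinguished hyperedge all of whose vertices have degree k+1. Then d_H(e₀) = k², and every hyperedge a ∈ E satisfies a ∩ e₀ ≠ ∅ (there is no hyperedge disjoint from e₀). -/
open Finset

variable {V : Type*}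

theorem stmt6 {V : Type*} [Fintype V] [DecidableEq V] (k : ℕ) (hk : 2 ≤ k)
    (E : Finset (Finset V)) (e₀ : Finset V)
    (hlin : Linear E) (huni : ∀ e ∈ E, e.card = k)
    (hV : Fintype.card V = k ^ 2) (hEcard : E.card = k ^ 2 + 1)
    (he₀ : e₀ ∈ E) (hdeg₀ : ∀ x ∈ e₀, hyperDeg E x = k + 1)
    (hdeg : ∀ x : V, x ∉ e₀ → k ≤ hyperDeg E x) :
    edgeDeg E e₀ = k ^ 2 ∧ ∀ a ∈ E, (a ∩ e₀).Nonempty := by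
  have he₀card := huni e₀ he₀
  have hS : E.filter (fun a => a ≠ e₀ ∧ (a ∩ e₀).Nonempty)
      = e₀.biUnion (fun x => E.filter (fun a => a ≠ e₀ ∧ x ∈ a)) := by
    ext a
    simp only [mem_filter, mem_biUnion]
    constructor
    · rintro ⟨ha, hne, y, hy⟩
      rw [mem_inter] at hy
      exact ⟨y, hy.2, ha, hne, hy.1⟩
    · rintro ⟨x, hx, ha, hne, hxa⟩
      exact ⟨ha, hne, x, mem_inter.mpr ⟨hxa, hx⟩⟩
  have hdisj : ∀ x ∈ e₀, ∀ y ∈ e₀, x ≠ y →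
      Disjoint (E.filter (fun a => a ≠ e₀ ∧ x ∈ a)) (E.filter (fun a => a ≠ e₀ ∧ y ∈ a)) := by
    intro x hx y hy hxy
    rw [Finset.disjoint_left]
    intro a ha hb
    simp only [mem_filter] at ha hb
    have h2 : 2 ≤ (a ∩ e₀).card := by
      have hsub : ({x, y} : Finset V) ⊆ a ∩ e₀ := by
        intro z hz
        simp only [mem_insert, mem_singleton] at hz
        rcases hz with rfl | rfl
        · exact mem_inter.mpr ⟨ha.2.2, hx⟩
        · exact mem_inter.mpr ⟨hb.2.2, hy⟩
      calc 2 = ({x, y} : Finset V).card := (card_pair hxy).symm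
        _ ≤ _ := card_le_card hsub
    have := hlin a ha.1 e₀ he₀ ha.2.1
    omega
  have hcardeach : ∀ x ∈ e₀, (E.filter (fun a => a ≠ e₀ ∧ x ∈ a)).card = k := by
    intro x hx
    have heq : E.filter (fun a => a ≠ e₀ ∧ x ∈ a) = (E.filter (fun e => x ∈ e)).erase e₀ := by
      ext a
      simp only [mem_filter, mem_erase]
      tauto
    rw [heq, card_erase_of_mem (by simp [mem_filter, he₀, hx])]
    have := hdeg₀ x hx
    unfold hyperDeg at this
    omega
  have hScard : (E.filter (fun a => a ≠ e₀ ∧ (a ∩ e₀).Nonempty)).card = k ^ 2 := by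
    rw [hS, card_biUnion hdisj, Finset.sum_congr rfl hcardeach, sum_const, he₀card,
      smul_eq_mul, sq]
  constructor
  · simpa [edgeDeg] using hScard
  · have hsub : E.filter (fun a => a ≠ e₀ ∧ (a ∩ e₀).Nonempty) ⊆ E.erase e₀ := by
      intro a ha
      simp only [mem_filter] at ha
      exact mem_erase.mpr ⟨ha.2.1, ha.1⟩
    have heq : E.filter (fun a => a ≠ e₀ ∧ (a ∩ e₀).Nonempty) = E.erase e₀ := by
      apply eq_of_subset_of_card_le hsub
      rw [card_erase_of_mem he₀, hEcard, hScard]; omega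
    intro a ha
    by_cases h : a = e₀
    · subst h; rw [inter_self]; exact card_pos.mp (by omega)
    · have hmem : a ∈ E.erase e₀ := mem_erase.mpr ⟨h, ha⟩
      rw [← heq] at hmem
      exact (mem_filter.mp hmem).2.2
end

section
/- Let k ≥ 2, let H = (V,E) be a hypergraph in the class ℋ_k with distinguished hyperedge e₀, and let e ∈ E with e ≠ e₀. Then there exists a vertex x₀ ∈ e₀ such that e ∩ e₀ = {x₀}. -/
open Finset

variable {V : Type*}

theorem stmt7 {V : Type*} [Fintype V] [DecidableEq V] (k : ℕ) (hk : 2 ≤ k)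
    (E : Finset (Finset V)) (e₀ : Finset V)
    (hlin : Linear E) (huni : ∀ e ∈ E, e.card = k)
    (hV : Fintype.card V = k ^ 2) (hEcard : E.card = k ^ 2 + 1)
    (he₀ : e₀ ∈ E) (hdeg₀ : ∀ x ∈ e₀, hyperDeg E x = k + 1)
    (hdeg : ∀ x : V, x ∉ e₀ → k ≤ hyperDeg E x)
    (e : Finset V) (he : e ∈ E) (hene : e ≠ e₀) :
    ∃ x₀ ∈ e₀, e ∩ e₀ = {x₀} := by
  have hcard1 : (e ∩ e₀).card ≤ 1 := hlin e he e₀ he₀ hene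
  have he₀card : e₀.card = k := huni e₀ he₀
  have hne : (e ∩ e₀).Nonempty := by
    by_contra h
    have h0 : (e ∩ e₀).card = 0 := by
      rw [Finset.card_eq_zero]
      exact Finset.not_nonempty_iff_eq_empty.mp h
    have hterm : ∀ a : Finset V, (a ∩ e₀).card = ∑ x ∈ e₀, if x ∈ a then 1 else 0 := by
      intro a
      rw [Finset.inter_comm, ← Finset.filter_mem_eq_inter, Finset.card_filter]
    have hsum : ∑ a ∈ E, (a ∩ e₀).card = k * (k + 1) := by
      calc ∑ a ∈ E, (a ∩ e₀).card
          = ∑ a ∈ E, ∑ x ∈ e₀, if x ∈ a then 1 else 0 := by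
            exact Finset.sum_congr rfl fun a _ => hterm a
        _ = ∑ x ∈ e₀, ∑ a ∈ E, if x ∈ a then 1 else 0 := Finset.sum_comm
        _ = ∑ x ∈ e₀, hyperDeg E x := by
            refine Finset.sum_congr rfl fun x _ => ?_
            rw [hyperDeg, Finset.card_filter]
        _ = ∑ x ∈ e₀, (k + 1) := Finset.sum_congr rfl fun x hx => hdeg₀ x hx
        _ = k * (k + 1) := by rw [Finset.sum_const, he₀card, smul_eq_mul]
    have he' : e ∈ E.erase e₀ := Finset.mem_erase.mpr ⟨hene, he⟩
    have hsplit1 : ∑ a ∈ E.erase e₀, (a ∩ e₀).card + (e₀ ∩ e₀).card = ∑ a ∈ E, (a ∩ e₀).card :=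
      Finset.sum_erase_add E _ he₀
    have hsplit2 : ∑ a ∈ (E.erase e₀).erase e, (a ∩ e₀).card + (e ∩ e₀).card
        = ∑ a ∈ E.erase e₀, (a ∩ e₀).card :=
      Finset.sum_erase_add _ _ he'
    have hbound : ∑ a ∈ (E.erase e₀).erase e, (a ∩ e₀).card ≤ ((E.erase e₀).erase e).card * 1 := by
      refine Finset.sum_le_card_nsmul _ _ 1 fun a ha => ?_
      have ha' := Finset.mem_erase.mp ha
      have ha'' := Finset.mem_erase.mp ha'.2
      exact hlin a ha''.2 e₀ he₀ ha''.1
    have hcardE : ((E.erase e₀).erase e).card = k ^ 2 - 1 := by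
      rw [Finset.card_erase_of_mem he', Finset.card_erase_of_mem he₀, hEcard]; omega
    have hself : (e₀ ∩ e₀).card = k := by rw [Finset.inter_self, he₀card]
    have hk2 : 1 ≤ k ^ 2 := Nat.one_le_pow _ _ (by omega)
    have : k * (k + 1) = k ^ 2 + k := by ring
    omega
  have : (e ∩ e₀).card = 1 := le_antisymm hcard1 (Finset.card_pos.mpr hne)
  obtain ⟨x₀, hx₀⟩ := Finset.card_eq_one.mp this
  have hmem : x₀ ∈ e ∩ e₀ := hx₀ ▸ Finset.mem_singleton_self x₀
  exact ⟨x₀, (Finset.mem_inter.mp hmem).2, hx₀⟩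
end

section
/- Let k ≥ 2, let H = (V,E) be a hypergraph in the class ℋ_k with distinguished hyperedge e₀, let e ∈ E with e ≠ e₀, and let x₀ be the unique vertex with e ∩ e₀ = {x₀}. Then for every vertex x ∈ e₀ with x ≠ x₀, there exists exactly one hyperedge a ∈ E with x ∈ a, a ≠ e₀, and a ∩ e = ∅. -/
open Finset

variable {V : Type*}

theorem stmt8 {V : Type*} [Fintype V] [DecidableEq V] (k : ℕ) (hk : 2 ≤ k)
    (E : Finset (Finset V)) (e₀ : Finset V)
    (hlin : Linear E) (huni : ∀ e ∈ E, e.card = k)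
    (hV : Fintype.card V = k ^ 2) (hEcard : E.card = k ^ 2 + 1)
    (he₀ : e₀ ∈ E) (hdeg₀ : ∀ x ∈ e₀, hyperDeg E x = k + 1)
    (hdeg : ∀ x : V, x ∉ e₀ → k ≤ hyperDeg E x)
    (e : Finset V) (he : e ∈ E) (hene : e ≠ e₀)
    (x₀ : V) (hx₀ : e ∩ e₀ = {x₀}) :
    ∀ x ∈ e₀, x ≠ x₀ → ∃! a : Finset V, a ∈ E ∧ a ≠ e₀ ∧ x ∈ a ∧ a ∩ e = ∅ := by
  intro x hx hxx₀
  have hx₀mem : x₀ ∈ e ∩ e₀ := by rw [hx₀]; exact Finset.mem_singleton_self x₀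
  have hx₀e : x₀ ∈ e := (Finset.mem_inter.mp hx₀mem).1
  have hx₀e₀ : x₀ ∈ e₀ := (Finset.mem_inter.mp hx₀mem).2
  have hxe : x ∉ e := by
    intro h
    have hxm : x ∈ e ∩ e₀ := Finset.mem_inter.mpr ⟨h, hx⟩
    rw [hx₀] at hxm
    exact hxx₀ (Finset.mem_singleton.mp hxm)
  set S := E.filter (fun a => x ∈ a) with hSdef
  have hSsub : S ⊆ E := Finset.filter_subset _ _
  have hScard : S.card = k + 1 := hdeg₀ x hx
  have hmemS : ∀ a, a ∈ S ↔ a ∈ E ∧ x ∈ a := by intro a; simp [hSdef]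
  have he₀S : e₀ ∈ S := (hmemS e₀).mpr ⟨he₀, hx⟩
  have hpair : ∀ a ∈ S, ∀ b ∈ S, a ≠ b → a ∩ b = {x} := by
    intro a ha b hb hab
    have h1 : ({x} : Finset V) ⊆ a ∩ b :=
      Finset.singleton_subset_iff.mpr
        (Finset.mem_inter.mpr ⟨((hmemS a).mp ha).2, ((hmemS b).mp hb).2⟩)
    have h2 : (a ∩ b).card ≤ 1 := hlin a (hSsub ha) b (hSsub hb) hab
    exact (Finset.eq_of_subset_of_card_le h1 (by simpa using h2)).symm
  -- covering: every vertex ≠ x lies in some edge through x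
  have hcov : ∀ y : V, y ≠ x → ∃ a ∈ S, y ∈ a := by
    intro y hy
    have hd : ∀ a ∈ S, ∀ b ∈ S, a ≠ b → Disjoint (a.erase x) (b.erase x) := by
      intro a ha b hb hab
      rw [Finset.disjoint_left]
      intro z hza hzb
      have hz : z ∈ a ∩ b := Finset.mem_inter.mpr
        ⟨Finset.mem_of_mem_erase hza, Finset.mem_of_mem_erase hzb⟩
      rw [hpair a ha b hb hab] at hz
      exact Finset.ne_of_mem_erase hza (Finset.mem_singleton.mp hz)
    have hconsts : ∀ a ∈ S, (a.erase x).card = k - 1 := by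
      intro a ha
      rw [Finset.card_erase_of_mem ((hmemS a).mp ha).2, huni a (hSsub ha)]
    have hcardB : (S.biUnion (fun a => a.erase x)).card = (k + 1) * (k - 1) := by
      rw [Finset.card_biUnion hd, Finset.sum_congr rfl hconsts, Finset.sum_const,
        hScard, smul_eq_mul]
    have hsub : S.biUnion (fun a => a.erase x) ⊆ Finset.univ.erase x := by
      intro z hz
      obtain ⟨a, _, hza⟩ := Finset.mem_biUnion.mp hz
      exact Finset.mem_erase.mpr ⟨Finset.ne_of_mem_erase hza, Finset.mem_univ z⟩
    have hcardU : (Finset.univ.erase x).card = (k + 1) * (k - 1) := by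
      rw [Finset.card_erase_of_mem (Finset.mem_univ x), Finset.card_univ, hV]
      obtain ⟨m, rfl⟩ : ∃ m, k = m + 2 := ⟨k - 2, by omega⟩
      have h1 : m + 2 - 1 = m + 1 := by omega
      have h2 : (m + 2) ^ 2 = (m + 2 + 1) * (m + 1) + 1 := by ring
      rw [h1, h2]
      omega
    have hEq : S.biUnion (fun a => a.erase x) = Finset.univ.erase x :=
      Finset.eq_of_subset_of_card_le hsub (by rw [hcardB, hcardU])
    have hyB : y ∈ S.biUnion (fun a => a.erase x) := by
      rw [hEq]; exact Finset.mem_erase.mpr ⟨hy, Finset.mem_univ y⟩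
    obtain ⟨a, ha, hya⟩ := Finset.mem_biUnion.mp hyB
    exact ⟨a, ha, Finset.mem_of_mem_erase hya⟩
  set T := S.erase e₀ with hTdef
  have hTS : ∀ a ∈ T, a ∈ S := fun a ha => Finset.mem_of_mem_erase ha
  have hTcard : T.card = k := by
    rw [hTdef, Finset.card_erase_of_mem he₀S, hScard]
    omega
  have hx₀T : ∀ a ∈ T, x₀ ∉ a := by
    intro a ha hx₀a
    have hane : a ≠ e₀ := Finset.ne_of_mem_erase ha
    have h2 : (a ∩ e₀).card ≤ 1 := hlin a (hSsub (hTS a ha)) e₀ he₀ hane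
    have hx1 : x ∈ a ∩ e₀ := Finset.mem_inter.mpr ⟨((hmemS a).mp (hTS a ha)).2, hx⟩
    have hx2 : x₀ ∈ a ∩ e₀ := Finset.mem_inter.mpr ⟨hx₀a, hx₀e₀⟩
    have hss : ({x, x₀} : Finset V) ⊆ a ∩ e₀ := by
      intro z hz
      rcases Finset.mem_insert.mp hz with rfl | hz
      · exact hx1
      · rw [Finset.mem_singleton.mp hz]; exact hx2
    have hle : ({x, x₀} : Finset V).card ≤ 1 := le_trans (Finset.card_le_card hss) h2
    rw [Finset.card_insert_of_notMem (by simpa using hxx₀), Finset.card_singleton] at hle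
    omega
  have haneqe : ∀ a ∈ T, a ≠ e := by
    intro a ha h
    exact hxe (h ▸ ((hmemS a).mp (hTS a ha)).2)
  set M := T.filter (fun a => (a ∩ e).Nonempty) with hMdef
  have hMT : ∀ a ∈ M, a ∈ T := fun a ha => (Finset.mem_filter.mp ha).1
  have hMd : ∀ a ∈ M, ∀ b ∈ M, a ≠ b → Disjoint (a ∩ e) (b ∩ e) := by
    intro a ha b hb hab
    rw [Finset.disjoint_left]
    intro z hza hzb
    have hz : z ∈ a ∩ b := Finset.mem_inter.mpr
      ⟨(Finset.mem_inter.mp hza).1, (Finset.mem_inter.mp hzb).1⟩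
    rw [hpair a (hTS a (hMT a ha)) b (hTS b (hMT b hb)) hab] at hz
    exact hxe ((Finset.mem_singleton.mp hz) ▸ (Finset.mem_inter.mp hza).2)
  have hMcard1 : ∀ a ∈ M, (a ∩ e).card = 1 := by
    intro a ha
    have h1 : (a ∩ e).Nonempty := (Finset.mem_filter.mp ha).2
    have h2 : (a ∩ e).card ≤ 1 :=
      hlin a (hSsub (hTS a (hMT a ha))) e he (haneqe a (hMT a ha))
    exact le_antisymm h2 (Finset.Nonempty.card_pos h1)
  have hBM : M.biUnion (fun a => a ∩ e) = e.erase x₀ := by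
    apply Finset.Subset.antisymm
    · intro z hz
      obtain ⟨a, ha, hza⟩ := Finset.mem_biUnion.mp hz
      refine Finset.mem_erase.mpr ⟨?_, (Finset.mem_inter.mp hza).2⟩
      intro h
      exact hx₀T a (hMT a ha) (h ▸ (Finset.mem_inter.mp hza).1)
    · intro y hy
      have hyx : y ≠ x := fun h => hxe (h ▸ Finset.mem_of_mem_erase hy)
      obtain ⟨a, haS, hya⟩ := hcov y hyx
      have hane₀ : a ≠ e₀ := by
        intro h
        have : y ∈ e ∩ e₀ := Finset.mem_inter.mpr ⟨Finset.mem_of_mem_erase hy, h ▸ hya⟩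
        rw [hx₀] at this
        exact Finset.ne_of_mem_erase hy (Finset.mem_singleton.mp this)
      have haT : a ∈ T := Finset.mem_erase.mpr ⟨hane₀, haS⟩
      have hyint : y ∈ a ∩ e := Finset.mem_inter.mpr ⟨hya, Finset.mem_of_mem_erase hy⟩
      have haM : a ∈ M := Finset.mem_filter.mpr ⟨haT, ⟨y, hyint⟩⟩
      exact Finset.mem_biUnion.mpr ⟨a, haM, hyint⟩
  have hMcard : M.card = k - 1 := by
    have hc := Finset.card_biUnion hMd
    rw [hBM, Finset.card_erase_of_mem hx₀e, huni e he,
      Finset.sum_congr rfl hMcard1, Finset.sum_const, smul_eq_mul, mul_one] at hc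
    omega
  have hsplit := Finset.card_filter_add_card_filter_not
    (s := T) (p := fun a => (a ∩ e).Nonempty)
  rw [hTcard] at hsplit
  rw [← hMdef] at hsplit
  rw [hMcard] at hsplit
  have hDcard : (T.filter (fun a => ¬ (a ∩ e).Nonempty)).card = 1 := by omega
  obtain ⟨a, hDa⟩ := Finset.card_eq_one.mp hDcard
  have hmemD : ∀ b, b ∈ T.filter (fun a => ¬ (a ∩ e).Nonempty) ↔
      (b ∈ E ∧ b ≠ e₀ ∧ x ∈ b ∧ b ∩ e = ∅) := by
    intro b
    constructor
    · intro hb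
      obtain ⟨hbT, hbn⟩ := Finset.mem_filter.mp hb
      obtain ⟨hbE, hxb⟩ := (hmemS b).mp (hTS b hbT)
      exact ⟨hbE, Finset.ne_of_mem_erase hbT, hxb,
        Finset.not_nonempty_iff_eq_empty.mp hbn⟩
    · intro ⟨hbE, hbne, hxb, hbint⟩
      refine Finset.mem_filter.mpr ⟨Finset.mem_erase.mpr ⟨hbne, (hmemS b).mpr ⟨hbE, hxb⟩⟩, ?_⟩
      rw [hbint]
      exact Finset.not_nonempty_empty
  refine ⟨a, ?_, ?_⟩
  · exact (hmemD a).mp (hDa ▸ Finset.mem_singleton_self a)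
  · intro b hb
    have : b ∈ ({a} : Finset (Finset V)) := hDa ▸ (hmemD b).mpr hb
    exact Finset.mem_singleton.mp this
end

section
/- Let k ≥ 2 and let H = (V,E) be a hypergraph in the class ℋ_k. Then the chromatic index of H satisfies k + 1 ≤ q(H) ≤ 1 + k·⌈k/2⌉. -/
open Finset

variable {V : Type*}

lemma deg_sum [Fintype V] [DecidableEq V] (E : Finset (Finset V)) :
    ∑ x : V, hyperDeg E x = ∑ e ∈ E, e.card := by
  unfold hyperDeg
  simp only [Finset.card_filter]
  rw [Finset.sum_comm]
  congr 1
  ext e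
  simp [Finset.sum_boole, Finset.filter_univ_mem]


lemma lin_unique [DecidableEq V] {E : Finset (Finset V)} (hlin : Linear E)
    {f g : Finset V} (hf : f ∈ E) (hg : g ∈ E) (hfg : f ≠ g)
    {u w : V} (huf : u ∈ f) (hug : u ∈ g) (hwf : w ∈ f) (hwg : w ∈ g) : u = w := by
  by_contra hne
  have h2 : 2 ≤ (f ∩ g).card := by
    have : ({u, w} : Finset V) ⊆ f ∩ g := by
      intro z hz
      simp only [Finset.mem_insert, Finset.mem_singleton] at hz
      rcases hz with rfl | rfl <;> simp [Finset.mem_inter, *]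
    calc 2 = ({u, w} : Finset V).card := by rw [Finset.card_insert_of_notMem (by simpa), Finset.card_singleton]
    _ ≤ _ := Finset.card_le_card this
  have := hlin f hf g hg hfg
  omega


lemma sum_ones {α : Type*} [DecidableEq α] {s : Finset α} {c : α → ℕ}
    (hle : ∀ y ∈ s, c y ≤ 1) (hsum : ∑ y ∈ s, c y = s.card) : ∀ y ∈ s, c y = 1 := by
  intro y hy
  by_contra hne
  have hy0 : c y = 0 := by have := hle y hy; omega
  have : ∑ z ∈ s, c z = ∑ z ∈ s.erase y, c z := by
    rw [← Finset.add_sum_erase s c hy, hy0, zero_add]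
  have hb : ∑ z ∈ s.erase y, c z ≤ (s.erase y).card * 1 := by
    apply Finset.sum_le_card_nsmul
    intro z hz; exact hle z (Finset.mem_of_mem_erase hz)
  rw [Finset.card_erase_of_mem hy] at hb
  have hpos : 0 < s.card := Finset.card_pos.mpr ⟨y, hy⟩
  omega


lemma deg_out [Fintype V] [DecidableEq V] {k : ℕ} {E : Finset (Finset V)} {e₀ : Finset V}
    (huni : ∀ e ∈ E, e.card = k)
    (hV : Fintype.card V = k ^ 2) (hEcard : E.card = k ^ 2 + 1)
    (he₀ : e₀ ∈ E) (hdeg₀ : ∀ x ∈ e₀, hyperDeg E x = k + 1)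
    (hdeg : ∀ x : V, x ∉ e₀ → k ≤ hyperDeg E x) :
    ∀ v : V, v ∉ e₀ → hyperDeg E v = k := by
  have he₀card : e₀.card = k := huni e₀ he₀
  have htot : ∑ x : V, hyperDeg E x = (k ^ 2 + 1) * k := by
    rw [deg_sum, Finset.sum_congr rfl huni, Finset.sum_const, hEcard, smul_eq_mul]
  have hsplit : ∑ x ∈ e₀, hyperDeg E x + ∑ x ∈ e₀ᶜ, hyperDeg E x = (k ^ 2 + 1) * k := by
    rw [Finset.sum_add_sum_compl]; exact htot
  have h1 : ∑ x ∈ e₀, hyperDeg E x = k * (k + 1) := by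
    rw [Finset.sum_congr rfl hdeg₀, Finset.sum_const, he₀card, smul_eq_mul]
  have hcc : e₀ᶜ.card = k ^ 2 - k := by
    rw [Finset.card_compl, hV, he₀card]
  have h2 : ∑ x ∈ e₀ᶜ, hyperDeg E x = (k ^ 2 - k) * k := by
    have hk2 : k ≤ k ^ 2 := by nlinarith [sq_nonneg k]
    rw [h1] at hsplit
    have : (k ^ 2 + 1) * k - k * (k + 1) = (k ^ 2 - k) * k := by
      obtain ⟨c, hc⟩ := Nat.le.dest hk2
      rw [← hc]
      have e1 : (k + c + 1) * k = k * (k + 1) + c * k := by ring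
      have e2 : k + c - k = c := by omega
      rw [e1, e2]; omega
    omega
  intro v hv
  by_contra hne
  have hvk : k + 1 ≤ hyperDeg E v := lt_of_le_of_ne (hdeg v hv) (Ne.symm hne)
  have hv' : v ∈ e₀ᶜ := Finset.mem_compl.mpr hv
  have hlt : (k ^ 2 - k) * k < ∑ x ∈ e₀ᶜ, hyperDeg E x := by
    calc (k ^ 2 - k) * k = ∑ _x ∈ e₀ᶜ, k := by rw [Finset.sum_const, hcc, smul_eq_mul]
    _ < ∑ x ∈ e₀ᶜ, hyperDeg E x := by
        apply Finset.sum_lt_sum (fun i hi => hdeg i (Finset.mem_compl.mp hi))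
        exact ⟨v, hv', lt_of_lt_of_le (Nat.lt_succ_self k) hvk⟩
  omega


lemma meets [Fintype V] [DecidableEq V] {k : ℕ} {E : Finset (Finset V)} {e₀ : Finset V}
    (hlin : Linear E) (huni : ∀ e ∈ E, e.card = k)
    (hEcard : E.card = k ^ 2 + 1)
    (he₀ : e₀ ∈ E) (hdeg₀ : ∀ x ∈ e₀, hyperDeg E x = k + 1) :
    ∀ f ∈ E, f ≠ e₀ → ∃! x, x ∈ e₀ ∧ x ∈ f := by
  have he₀card : e₀.card = k := huni e₀ he₀
  set S : V → Finset (Finset V) := fun x => (E.filter (fun e => x ∈ e)).erase e₀ with hS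
  have hScard : ∀ x ∈ e₀, (S x).card = k := by
    intro x hx
    rw [hS]
    simp only
    rw [Finset.card_erase_of_mem (Finset.mem_filter.mpr ⟨he₀, hx⟩)]
    have : (E.filter (fun e => x ∈ e)).card = k + 1 := hdeg₀ x hx
    omega
  have hdisj : ∀ x ∈ e₀, ∀ y ∈ e₀, x ≠ y → Disjoint (S x) (S y) := by
    intro x hx y hy hxy
    rw [Finset.disjoint_left]
    intro f hfx hfy
    rw [hS] at hfx hfy
    simp only [Finset.mem_erase, Finset.mem_filter] at hfx hfy
    exact hxy (lin_unique hlin hfx.2.1 he₀ hfx.1 hfx.2.2 hx hfy.2.2 hy)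
  have hsub : e₀.biUnion S ⊆ E.erase e₀ := by
    intro f hf
    rw [Finset.mem_biUnion] at hf
    obtain ⟨x, _, hfx⟩ := hf
    rw [hS] at hfx
    simp only [Finset.mem_erase, Finset.mem_filter] at hfx
    exact Finset.mem_erase.mpr ⟨hfx.1, hfx.2.1⟩
  have hcard : (e₀.biUnion S).card = k ^ 2 := by
    rw [Finset.card_biUnion hdisj, Finset.sum_congr rfl hScard, Finset.sum_const,
      he₀card, smul_eq_mul, sq]
  have heq : e₀.biUnion S = E.erase e₀ := by
    apply Finset.eq_of_subset_of_card_le hsub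
    rw [hcard, Finset.card_erase_of_mem he₀, hEcard]; omega
  intro f hf hfe₀
  have : f ∈ e₀.biUnion S := heq ▸ Finset.mem_erase.mpr ⟨hfe₀, hf⟩
  rw [Finset.mem_biUnion] at this
  obtain ⟨x, hx, hfx⟩ := this
  rw [hS] at hfx
  simp only [Finset.mem_erase, Finset.mem_filter] at hfx
  refine ⟨x, ⟨hx, hfx.2.2⟩, ?_⟩
  rintro y ⟨hy, hyf⟩
  exact lin_unique hlin hf he₀ hfe₀ hyf hy hfx.2.2 hx


lemma through [Fintype V] [DecidableEq V] {k : ℕ} {E : Finset (Finset V)} {e₀ : Finset V}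
    (hlin : Linear E) (huni : ∀ e ∈ E, e.card = k)
    (he₀ : e₀ ∈ E)
    (hmeets : ∀ f ∈ E, f ≠ e₀ → ∃! x, x ∈ e₀ ∧ x ∈ f)
    (hdegout : ∀ v : V, v ∉ e₀ → hyperDeg E v = k) :
    ∀ v : V, v ∉ e₀ → ∀ y ∈ e₀, ∃! f, f ∈ (E.filter (fun e => y ∈ e)).erase e₀ ∧ v ∈ f := by
  intro v hv y hy
  set T : Finset (Finset V) := E.filter (fun e => v ∈ e) with hT
  have hTne₀ : ∀ f ∈ T, f ≠ e₀ := by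
    rintro f hf rfl
    exact hv (Finset.mem_filter.mp hf).2
  set A : V → Finset (Finset V) := fun y => T.filter (fun e => y ∈ e) with hA
  have hA1 : ∀ y ∈ e₀, (A y).card ≤ 1 := by
    intro y hy
    apply Finset.card_le_one.mpr
    intro f hf g hg
    simp only [hA, hT, Finset.mem_filter] at hf hg
    by_contra hne
    have hvy : v ≠ y := fun h => hv (h ▸ hy)
    exact hvy (lin_unique hlin hf.1.1 hg.1.1 hne hf.1.2 hg.1.2 hf.2 hg.2)
  have hdisj : ∀ x ∈ e₀, ∀ y ∈ e₀, x ≠ y → Disjoint (A x) (A y) := by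
    intro x hx y' hy' hxy
    rw [Finset.disjoint_left]
    intro f hfx hfy
    simp only [hA, hT, Finset.mem_filter] at hfx hfy
    exact hxy (lin_unique hlin hfx.1.1 he₀ (hTne₀ f (Finset.mem_filter.mpr hfx.1)) hfx.2 hx hfy.2 hy')
  have hcover : T = e₀.biUnion A := by
    apply Finset.Subset.antisymm
    · intro f hf
      obtain ⟨x, hx, _⟩ := hmeets f (Finset.mem_filter.mp hf).1 (hTne₀ f hf)
      exact Finset.mem_biUnion.mpr ⟨x, hx.1, Finset.mem_filter.mpr ⟨hf, hx.2⟩⟩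
    · intro f hf
      obtain ⟨x, _, hfx⟩ := Finset.mem_biUnion.mp hf
      exact (Finset.mem_filter.mp hfx).1
  have hTcard : T.card = k := hdegout v hv
  have he₀card : e₀.card = k := huni e₀ he₀
  have hsum : ∑ y ∈ e₀, (A y).card = e₀.card := by
    rw [← Finset.card_biUnion hdisj, ← hcover, hTcard, he₀card]
  have h1 : (A y).card = 1 := sum_ones hA1 hsum y hy
  obtain ⟨a, ha⟩ := Finset.card_eq_one.mp h1
  have hamem : a ∈ A y := ha ▸ Finset.mem_singleton_self a
  simp only [hA, hT, Finset.mem_filter] at hamem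
  refine ⟨a, ⟨Finset.mem_erase.mpr ⟨hTne₀ a (Finset.mem_filter.mpr hamem.1), Finset.mem_filter.mpr ⟨hamem.1.1, hamem.2⟩⟩, hamem.1.2⟩, ?_⟩
  rintro f ⟨hf, hvf⟩
  rw [Finset.mem_erase, Finset.mem_filter] at hf
  have : f ∈ A y := by
    simp only [hA, hT, Finset.mem_filter]
    exact ⟨⟨hf.2.1, hvf⟩, hf.2.2⟩
  rw [ha, Finset.mem_singleton] at this
  exact this


lemma partner [Fintype V] [DecidableEq V] {k : ℕ} {E : Finset (Finset V)} {e₀ : Finset V}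
    (hk : 1 ≤ k) (hlin : Linear E) (huni : ∀ e ∈ E, e.card = k)
    (he₀ : e₀ ∈ E) (hdeg₀ : ∀ x ∈ e₀, hyperDeg E x = k + 1)
    (hmeets : ∀ f ∈ E, f ≠ e₀ → ∃! x, x ∈ e₀ ∧ x ∈ f)
    (hthrough : ∀ v : V, v ∉ e₀ → ∀ y ∈ e₀, ∃! f, f ∈ (E.filter (fun e => y ∈ e)).erase e₀ ∧ v ∈ f)
    {x y : V} (hx : x ∈ e₀) (hy : y ∈ e₀) (hxy : x ≠ y)
    {f : Finset V} (hf : f ∈ E) (hfe₀ : f ≠ e₀) (hxf : x ∈ f) :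
    ∃! g, g ∈ (E.filter (fun e => y ∈ e)).erase e₀ ∧ f ∩ g = ∅ := by
  set L : Finset (Finset V) := (E.filter (fun e => y ∈ e)).erase e₀ with hL
  have hLmem : ∀ g ∈ L, g ∈ E ∧ g ≠ e₀ ∧ y ∈ g := by
    intro g hg
    rw [hL, Finset.mem_erase, Finset.mem_filter] at hg
    exact ⟨hg.2.1, hg.1, hg.2.2⟩
  have hLcard : L.card = k := by
    rw [hL, Finset.card_erase_of_mem (Finset.mem_filter.mpr ⟨he₀, hy⟩)]
    have : (E.filter (fun e => y ∈ e)).card = k + 1 := hdeg₀ y hy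
    omega
  set F : Finset V := f.erase x with hF
  have hFcard : F.card = k - 1 := by
    rw [hF, Finset.card_erase_of_mem hxf, huni f hf]
  have hFout : ∀ v ∈ F, v ∉ e₀ := by
    intro v hv hve₀
    rw [hF, Finset.mem_erase] at hv
    exact hv.1 (lin_unique hlin hf he₀ hfe₀ hv.2 hve₀ hxf hx)
  -- x not in any g ∈ L
  have hxnotg : ∀ g ∈ L, x ∉ g := by
    intro g hg hxg
    obtain ⟨hgE, hgne, hyg⟩ := hLmem g hg
    exact hxy (lin_unique hlin hgE he₀ hgne hxg hx hyg hy)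
  have hone : ∀ v ∈ F, (L.filter (fun g => v ∈ g)).card = 1 := by
    intro v hv
    obtain ⟨a, ⟨haL, hva⟩, hu⟩ := hthrough v (hFout v hv) y hy
    rw [Finset.card_eq_one]
    refine ⟨a, ?_⟩
    ext g
    simp only [Finset.mem_filter, Finset.mem_singleton]
    constructor
    · rintro ⟨hgL, hvg⟩; exact hu g ⟨hgL, hvg⟩
    · rintro rfl; exact ⟨haL, hva⟩
  have hdisj : ∀ u ∈ F, ∀ w ∈ F, u ≠ w →
      Disjoint (L.filter (fun g => u ∈ g)) (L.filter (fun g => w ∈ g)) := by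
    intro u hu w hw huw
    rw [Finset.disjoint_left]
    intro g hgu hgw
    rw [Finset.mem_filter] at hgu hgw
    obtain ⟨hgE, hgne, hyg⟩ := hLmem g hgu.1
    have hgf : g ≠ f := by
      rintro rfl
      exact hxnotg g hgu.1 hxf
    have hu' : u ∈ f := Finset.mem_of_mem_erase (hF ▸ hu)
    have hw' : w ∈ f := Finset.mem_of_mem_erase (hF ▸ hw)
    exact huw (lin_unique hlin hgE hf hgf hgu.2 hu' hgw.2 hw')
  have hM : L.filter (fun g => (f ∩ g).Nonempty) = F.biUnion (fun v => L.filter (fun g => v ∈ g)) := by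
    ext g
    simp only [Finset.mem_filter, Finset.mem_biUnion]
    constructor
    · rintro ⟨hgL, w, hw⟩
      rw [Finset.mem_inter] at hw
      have hwx : w ≠ x := by
        rintro rfl; exact hxnotg g hgL hw.2
      exact ⟨w, Finset.mem_erase.mpr ⟨hwx, hw.1⟩, hgL, hw.2⟩
    · rintro ⟨v, hvF, hg⟩
      exact ⟨hg.1, v, Finset.mem_inter.mpr ⟨Finset.mem_of_mem_erase hvF, hg.2⟩⟩
  have hMcard : (L.filter (fun g => (f ∩ g).Nonempty)).card = k - 1 := by
    rw [hM, Finset.card_biUnion hdisj, Finset.sum_congr rfl hone, Finset.sum_const, hFcard,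
      smul_eq_mul, mul_one]
  have hNcard : (L.filter (fun g => ¬(f ∩ g).Nonempty)).card = 1 := by
    have h := Finset.card_filter_add_card_filter_not
      (s := L) (p := fun g => (f ∩ g).Nonempty)
    rw [hMcard, hLcard] at h
    omega
  obtain ⟨a, ha⟩ := Finset.card_eq_one.mp hNcard
  have hamem : a ∈ L.filter (fun g => ¬(f ∩ g).Nonempty) := ha ▸ Finset.mem_singleton_self a
  rw [Finset.mem_filter, Finset.not_nonempty_iff_eq_empty] at hamem
  refine ⟨a, hamem, ?_⟩
  rintro g ⟨hgL, hgd⟩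
  have : g ∈ L.filter (fun g => ¬(f ∩ g).Nonempty) := by
    rw [Finset.mem_filter, Finset.not_nonempty_iff_eq_empty]
    exact ⟨hgL, hgd⟩
  rw [ha, Finset.mem_singleton] at this
  exact this


theorem stmt10 {V : Type*} [Fintype V] [DecidableEq V] (k : ℕ) (hk : 2 ≤ k)
    (E : Finset (Finset V)) (e₀ : Finset V)
    (hlin : Linear E) (huni : ∀ e ∈ E, e.card = k)
    (hV : Fintype.card V = k ^ 2) (hEcard : E.card = k ^ 2 + 1)
    (he₀ : e₀ ∈ E) (hdeg₀ : ∀ x ∈ e₀, hyperDeg E x = k + 1)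
    (hdeg : ∀ x : V, x ∉ e₀ → k ≤ hyperDeg E x) :
    k + 1 ≤ chromIndex E ∧ chromIndex E ≤ 1 + k * ((k + 1) / 2) := by
  classical
  have hk1 : 1 ≤ k := by omega
  have he₀card : e₀.card = k := huni e₀ he₀
  have hdegout := deg_out huni hV hEcard he₀ hdeg₀ hdeg
  have hmeets := meets hlin huni hEcard he₀ hdeg₀
  have hthrough := through hlin huni he₀ hmeets hdegout
  have hpart : ∀ x, x ∈ e₀ → ∀ y, y ∈ e₀ → x ≠ y → ∀ f, f ∈ E → f ≠ e₀ → x ∈ f →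
      ∃! g, g ∈ (E.filter (fun e => y ∈ e)).erase e₀ ∧ f ∩ g = ∅ :=
    fun x hx y hy hxy f hf hfe hxf =>
      partner hk1 hlin huni he₀ hdeg₀ hmeets hthrough hx hy hxy hf hfe hxf
  -- choose the unique e₀-vertex of each edge
  have hVne : Nonempty V := by
    rw [← Fintype.card_pos_iff, hV]
    exact pow_pos (by omega) 2
  have hmeets' : ∀ f, f ∈ E → f ≠ e₀ → ∃! x, x ∈ e₀ ∧ x ∈ f := fun f hf h => hmeets f hf h
  choose! xv hxv hxvu using hmeets'
  choose! pt hpt hptu using hpart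
  set Q : ℕ := (k + 1) / 2 with hQ
  set q : ℕ := 1 + k * Q with hq
  have hQ1 : 1 ≤ Q := by omega
  -- class of a vertex
  set Lcl : V → Finset (Finset V) := fun y => (E.filter (fun e => y ∈ e)).erase e₀ with hLcl
  have hLclmem : ∀ y g, g ∈ Lcl y → g ∈ E ∧ g ≠ e₀ ∧ y ∈ g := by
    intro y g hg
    simp only [hLcl, Finset.mem_erase, Finset.mem_filter] at hg
    exact ⟨hg.2.1, hg.1, hg.2.2⟩
  have hLclmem' : ∀ y g, g ∈ E → g ≠ e₀ → y ∈ g → g ∈ Lcl y := by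
    intro y g h1 h2 h3
    simp only [hLcl, Finset.mem_erase, Finset.mem_filter]
    exact ⟨h2, h1, h3⟩
  have hLclcard : ∀ y ∈ e₀, (Lcl y).card = k := by
    intro y hy
    simp only [hLcl]
    rw [Finset.card_erase_of_mem (Finset.mem_filter.mpr ⟨he₀, hy⟩)]
    have : (E.filter (fun e => y ∈ e)).card = k + 1 := hdeg₀ y hy
    omega
  -- index equivalence
  have ideq : {a // a ∈ e₀} ≃ Fin k := (e₀.equivFin).trans (finCongr he₀card)
  set iv : Finset V → ℕ := fun f => if hx : xv f ∈ e₀ then (ideq ⟨xv f, hx⟩).val else 0 with hiv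
  set xb : Finset V → V :=
    fun f => if h : 2 * (iv f / 2) < k then (ideq.symm ⟨2 * (iv f / 2), h⟩ : {a // a ∈ e₀}).val
      else xv f with hxb
  set rep : Finset V → Finset V :=
    fun f => if iv f % 2 = 0 then f else pt (xv f) (xb f) f with hrep
  set mv : Finset V → ℕ :=
    fun f => if h : rep f ∈ Lcl (xb f) then ((Lcl (xb f)).equivFin ⟨rep f, h⟩).val else 0 with hmv
  set cn : Finset V → ℕ :=
    fun f => if f ∈ E.erase e₀ then 1 + (iv f / 2) * k + mv f else 0 with hcn
  -- basic facts for edges ≠ e₀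
  have hfacts : ∀ f, ∀ (_ : f ∈ E) (_ : f ≠ e₀),
      xv f ∈ e₀ ∧ xv f ∈ f ∧ (∀ (h : xv f ∈ e₀), iv f = (ideq ⟨xv f, h⟩).val) ∧ iv f < k := by
    intro f hf hne
    obtain ⟨h1, h2⟩ := hxv f hf hne
    refine ⟨h1, h2, ?_, ?_⟩
    · intro h; simp only [hiv]; rw [dif_pos h]
    · simp only [hiv]; rw [dif_pos h1]; exact (ideq ⟨xv f, h1⟩).isLt
  have h2jlt : ∀ f, f ∈ E → f ≠ e₀ → 2 * (iv f / 2) < k := by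
    intro f hf hne
    have := (hfacts f hf hne).2.2.2
    omega
  have hxbval : ∀ f, ∀ (hf : f ∈ E) (hne : f ≠ e₀),
      xb f = (ideq.symm ⟨2 * (iv f / 2), h2jlt f hf hne⟩ : {a // a ∈ e₀}).val := by
    intro f hf hne
    simp only [hxb]
    rw [dif_pos (h2jlt f hf hne)]
  have hxbmem : ∀ f ∈ E, f ≠ e₀ → xb f ∈ e₀ := by
    intro f hf hne
    rw [hxbval f hf hne]
    exact (ideq.symm _).2
  -- even case: xb f = xv f and rep f = f
  have heven : ∀ f ∈ E, f ≠ e₀ → iv f % 2 = 0 → xb f = xv f ∧ rep f = f := by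
    intro f hf hne hpar
    obtain ⟨h1, h2, h3, h4⟩ := hfacts f hf hne
    constructor
    · rw [hxbval f hf hne]
      have hval : ((ideq ⟨xv f, h1⟩ : Fin k) : ℕ) = iv f := (h3 h1).symm
      have hfin : (⟨2 * (iv f / 2), h2jlt f hf hne⟩ : Fin k) = ideq ⟨xv f, h1⟩ := by
        apply Fin.ext
        rw [hval]
        show 2 * (iv f / 2) = iv f
        omega
      rw [hfin, Equiv.symm_apply_apply]
    · simp only [hrep]; rw [if_pos hpar]
  -- odd case
  have hodd : ∀ f ∈ E, f ≠ e₀ → iv f % 2 = 1 →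
      xv f ≠ xb f ∧ rep f = pt (xv f) (xb f) f := by
    intro f hf hne hpar
    obtain ⟨h1, h2, h3, h4⟩ := hfacts f hf hne
    constructor
    · intro hcontr
      have hsub : (⟨xv f, h1⟩ : {a // a ∈ e₀}) = ideq.symm ⟨2 * (iv f / 2), h2jlt f hf hne⟩ :=
        Subtype.ext (by rw [← hxbval f hf hne]; exact hcontr)
      have h5 := congrArg ideq hsub
      rw [Equiv.apply_symm_apply] at h5
      have h6 := congrArg Fin.val h5
      rw [← h3 h1] at h6
      simp only at h6
      omega
    · simp only [hrep]; rw [if_neg (by omega)]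
  have hrepmem : ∀ f ∈ E, f ≠ e₀ → rep f ∈ Lcl (xb f) := by
    intro f hf hne
    obtain ⟨h1, h2, h3, h4⟩ := hfacts f hf hne
    rcases Nat.mod_two_eq_zero_or_one (iv f) with hpar | hpar
    · obtain ⟨hb, hr⟩ := heven f hf hne hpar
      rw [hr, hb]
      exact hLclmem' _ f hf hne h2
    · obtain ⟨hb, hr⟩ := hodd f hf hne hpar
      rw [hr]
      exact ((hpt (xv f) h1 (xb f) (hxbmem f hf hne) hb f hf hne h2).1)
  have hodddisj : ∀ f ∈ E, f ≠ e₀ → iv f % 2 = 1 → f ∩ rep f = ∅ := by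
    intro f hf hne hpar
    obtain ⟨h1, h2, h3, h4⟩ := hfacts f hf hne
    obtain ⟨hb, hr⟩ := hodd f hf hne hpar
    rw [hr]
    exact ((hpt (xv f) h1 (xb f) (hxbmem f hf hne) hb f hf hne h2).2)
  have hmvval : ∀ f ∈ E, f ≠ e₀ → ∀ (h : rep f ∈ Lcl (xb f)),
      mv f = ((Lcl (xb f)).equivFin ⟨rep f, h⟩).val := by
    intro f hf hne h
    simp only [hmv]
    exact dif_pos h
  have hmvlt : ∀ f ∈ E, f ≠ e₀ → mv f < k := by
    intro f hf hne
    rw [hmvval f hf hne (hrepmem f hf hne)]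
    have h5 := ((Lcl (xb f)).equivFin ⟨rep f, hrepmem f hf hne⟩).isLt
    exact Nat.lt_of_lt_of_le h5 (hLclcard (xb f) (hxbmem f hf hne)).le
  -- value of cn on edges
  have hcnval : ∀ f ∈ E, f ≠ e₀ → cn f = 1 + (iv f / 2) * k + mv f := by
    intro f hf hne
    simp only [hcn]
    rw [if_pos (Finset.mem_erase.mpr ⟨hne, hf⟩)]
  have hcnbound : ∀ f, cn f < q := by
    intro f
    by_cases hf : f ∈ E.erase e₀
    · rw [Finset.mem_erase] at hf
      rw [hcnval f hf.2 hf.1]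
      have h1 : iv f / 2 ≤ Q - 1 := by
        have := (hfacts f hf.2 hf.1).2.2.2
        omega
      have h2 : mv f < k := hmvlt f hf.2 hf.1
      have h3 : (iv f / 2) * k ≤ (Q - 1) * k := Nat.mul_le_mul_right k h1
      have h4 : (Q - 1) * k + k = Q * k := by
        have h5 : Q - 1 + 1 = Q := by omega
        calc (Q - 1) * k + k = ((Q - 1) + 1) * k := by ring
        _ = Q * k := by rw [h5]
      have h6 : 1 + (iv f / 2) * k + mv f < 1 + Q * k := by omega
      rw [hq, mul_comm k Q]
      exact h6
    · simp only [hcn]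
      rw [if_neg hf]
      simp only [hq]
      positivity
  -- the coloring is proper
  have hproper : ∀ f ∈ E, ∀ g ∈ E, f ≠ g → (f ∩ g).Nonempty → cn f ≠ cn g := by
    intro f hf g hg hfg hmeet
    -- dispatch e₀ cases
    have hcn0 : cn e₀ = 0 := by
      simp only [hcn]
      rw [if_neg (Finset.notMem_erase e₀ E)]
    by_cases hfe : f = e₀
    · have hgne : g ≠ e₀ := fun h => hfg (hfe.trans h.symm)
      rw [hfe, hcn0, hcnval g hg hgne]
      omega
    by_cases hge : g = e₀
    · rw [hge, hcn0, hcnval f hf hfe]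
      omega
    intro hcnEq
    rw [hcnval f hf hfe, hcnval g hg hge] at hcnEq
    have hmf := hmvlt f hf hfe
    have hmg := hmvlt g hg hge
    -- extract j and m equality
    have HJEQ : iv f / 2 = iv g / 2 := by
      have h1 : (iv f / 2) * k + mv f = (iv g / 2) * k + mv g := by omega
      have h2 : ((iv f / 2) * k + mv f) / k = iv f / 2 := by
        rw [mul_comm, Nat.mul_add_div (by omega), Nat.div_eq_of_lt hmf]
        omega
      have h3 : ((iv g / 2) * k + mv g) / k = iv g / 2 := by
        rw [mul_comm, Nat.mul_add_div (by omega), Nat.div_eq_of_lt hmg]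
        omega

      rw [← h2, ← h3, h1]
    have hjeq := HJEQ
    have hmeq : mv f = mv g := by
      have h1 : (iv f / 2) * k + mv f = (iv g / 2) * k + mv g := by omega
      rw [hjeq] at h1
      omega
    have hxbeq : xb f = xb g := by
      rw [hxbval f hf hfe, hxbval g hg hge]
      have hfin : (⟨2 * (iv f / 2), h2jlt f hf hfe⟩ : Fin k)
          = ⟨2 * (iv g / 2), h2jlt g hg hge⟩ := Fin.ext (by simp only []; rw [hjeq])
      exact congrArg (fun t : Fin k => (ideq.symm t : {a // a ∈ e₀}).val) hfin
    have hrepeq : rep f = rep g := by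
      have h1 := hmvval f hf hfe (hrepmem f hf hfe)
      have h2 := hmvval g hg hge (hrepmem g hg hge)
      rw [h1, h2] at hmeq
      -- move g's to f's class
      have hmemg : rep g ∈ Lcl (xb f) := by rw [hxbeq]; exact hrepmem g hg hge
      have key : ∀ y₁ y₂ : V, y₁ = y₂ → ∀ a (h1 : a ∈ Lcl y₁) (h2 : a ∈ Lcl y₂),
          ((Lcl y₁).equivFin ⟨a, h1⟩).val = ((Lcl y₂).equivFin ⟨a, h2⟩).val := by
        rintro y₁ y₂ rfl a h1 h2; rfl
      have h2' := key (xb g) (xb f) hxbeq.symm (rep g) (hrepmem g hg hge) hmemg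
      rw [h2'] at hmeq
      have := (Lcl (xb f)).equivFin.injective (Fin.ext hmeq)
      exact Subtype.ext_iff.mp this
    -- parity case analysis
    rcases Nat.mod_two_eq_zero_or_one (iv f) with hpf | hpf <;>
      rcases Nat.mod_two_eq_zero_or_one (iv g) with hpg | hpg
    · -- both even: f = g
      obtain ⟨_, hrf⟩ := heven f hf hfe hpf
      obtain ⟨_, hrg⟩ := heven g hg hge hpg
      exact hfg (by rw [← hrf, ← hrg, hrepeq])
    · -- f even, g odd: f = rep g and g ∩ rep g = ∅
      obtain ⟨_, hrf⟩ := heven f hf hfe hpf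
      have hdis := hodddisj g hg hge hpg
      rw [← hrepeq, hrf] at hdis
      rw [Finset.inter_comm] at hmeet
      rw [hdis] at hmeet
      exact Finset.not_nonempty_empty hmeet
    · -- f odd, g even
      obtain ⟨_, hrg⟩ := heven g hg hge hpg
      have hdis := hodddisj f hf hfe hpf
      rw [hrepeq, hrg] at hdis
      rw [hdis] at hmeet
      exact Finset.not_nonempty_empty hmeet
    · -- both odd: same class, same partner ⇒ f = g
      obtain ⟨h1f, h2f, h3f, h4f⟩ := hfacts f hf hfe
      obtain ⟨h1g, h2g, h3g, h4g⟩ := hfacts g hg hge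
      have hiveq : iv f = iv g := by omega
      have hxveq : xv f = xv g := by
        have : (⟨xv f, h1f⟩ : {a // a ∈ e₀}) = ⟨xv g, h1g⟩ := by
          apply ideq.injective
          apply Fin.ext
          rw [← h3f h1f, ← h3g h1g]; exact hiveq
        exact Subtype.ext_iff.mp this
      obtain ⟨hneb, _⟩ := hodd f hf hfe hpf
      obtain ⟨hhE, hhne, hxbh⟩ := hLclmem (xb f) (rep f) (hrepmem f hf hfe)
      have hfd : rep f ∩ f = ∅ := by rw [Finset.inter_comm]; exact hodddisj f hf hfe hpf
      have hgd : rep f ∩ g = ∅ := by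
        rw [hrepeq, Finset.inter_comm]; exact hodddisj g hg hge hpg
      have hfL : f ∈ (E.filter (fun e => xv f ∈ e)).erase e₀ :=
        Finset.mem_erase.mpr ⟨hfe, Finset.mem_filter.mpr ⟨hf, h2f⟩⟩
      have hgL : g ∈ (E.filter (fun e => xv f ∈ e)).erase e₀ :=
        Finset.mem_erase.mpr ⟨hge, Finset.mem_filter.mpr ⟨hg, hxveq ▸ h2g⟩⟩
      have hfw := hptu (xb f) (hxbmem f hf hfe) (xv f) h1f
        (fun hc => hneb hc.symm) (rep f) hhE hhne hxbh f ⟨hfL, hfd⟩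
      have hgw := hptu (xb f) (hxbmem f hf hfe) (xv f) h1f
        (fun hc => hneb hc.symm) (rep f) hhE hhne hxbh g ⟨hgL, hgd⟩
      exact hfg (hfw.trans hgw.symm)
  -- membership of q in the colorable set
  have hQmem : ColorableWith E q := by
    refine ⟨fun f => ⟨cn f, hcnbound f⟩, ?_⟩
    intro e he f hf hef hne
    simp only [ne_eq, Fin.mk.injEq]
    exact hproper e he f hf hef hne
  have hsetne : {n | ColorableWith E n}.Nonempty := ⟨q, hQmem⟩
  constructor
  · -- lower bound
    apply le_csInf hsetne
    rintro b ⟨c, hc⟩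
    have he₀ne : e₀.Nonempty := Finset.card_pos.mp (by omega)
    obtain ⟨x₀, hx₀⟩ := he₀ne
    have hTcard : (E.filter (fun e => x₀ ∈ e)).card = k + 1 := hdeg₀ x₀ hx₀
    have : (E.filter (fun e => x₀ ∈ e)).card ≤ (Finset.univ : Finset (Fin b)).card := by
      apply Finset.card_le_card_of_injOn c (fun a _ => Finset.mem_univ _)
      intro a ha b' hb' hab
      simp only [Finset.coe_filter, Set.mem_setOf_eq] at ha hb'
      by_contra hneq
      exact hc a ha.1 b' hb'.1 hneq ⟨x₀, Finset.mem_inter.mpr ⟨ha.2, hb'.2⟩⟩ hab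
    rw [hTcard, Finset.card_univ, Fintype.card_fin] at this
    omega
  · exact Nat.sInf_le hQmem
end

section
/- Let k ≥ 2 and let H = (V,E) be a hypergraph in the class ℋ_k with distinguished hyperedge e₀. Then every hyperedge e ∈ E with e ≠ e₀ satisfies d_H(e) = k² − k + 1, where d_H(e) is the number of hyperedges a ≠ e with a ∩ e ≠ ∅. -/
open Finset

variable {V : Type*}

/-!
Double counting gives `∑ₓ deg x = k (k² + 1)`; the `k` vertices of `e₀` contribute `k (k + 1)`,
so the remaining `k² - k` vertices, each of degree at least `k`, all have degree exactly `k`.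
In a linear hypergraph `d(e) + |e| = ∑_{x ∈ e} deg x`, so `d(e₀) = k² = |E| - 1`: every other
hyperedge `e` meets `e₀`, in exactly one vertex, and then `d(e) = k · k + 1 - k`.
-/

section

variable [DecidableEq V] {E : Finset (Finset V)} {e e₀ : Finset V}

theorem sum_hyperDeg [Fintype V] (E : Finset (Finset V)) :
    ∑ x, hyperDeg E x = ∑ e ∈ E, e.card := by
  simp_rw [hyperDeg, card_filter]
  rw [sum_comm]
  refine sum_congr rfl fun e _ => ?_
  rw [sum_ite_mem, univ_inter, card_eq_sum_ones]

theorem Linear.edgeDeg_add_card (hlin : Linear E) (he : e ∈ E) :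
    edgeDeg E e + e.card = ∑ x ∈ e, hyperDeg E x := by
  have hfibers : E.filter (fun a => a ≠ e ∧ (a ∩ e).Nonempty)
      = e.biUnion fun x => (E.filter fun a => x ∈ a).erase e := by
    ext a
    simp only [mem_filter, mem_biUnion, mem_erase, Finset.Nonempty, mem_inter]
    constructor
    · rintro ⟨haE, hne, x, hxa, hxe⟩
      exact ⟨x, hxe, hne, haE, hxa⟩
    · rintro ⟨x, hxe, hne, haE, hxa⟩
      exact ⟨haE, hne, x, hxa, hxe⟩
  have hdisj : (e : Set V).PairwiseDisjoint fun x => (E.filter fun a => x ∈ a).erase e := by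
    intro x hx y hy hxy
    refine disjoint_left.2 fun a hax hay => ?_
    simp only [mem_erase, mem_filter] at hax hay
    have : 1 < (a ∩ e).card :=
      one_lt_card.2 ⟨x, mem_inter.2 ⟨hax.2.2, hx⟩, y, mem_inter.2 ⟨hay.2.2, hy⟩, hxy⟩
    exact absurd (hlin a hax.2.1 e he hax.1) (not_le.2 this)
  rw [edgeDeg, hfibers, card_biUnion hdisj, card_eq_sum_ones, ← sum_add_distrib]
  exact sum_congr rfl fun x hx => card_erase_add_one (mem_filter.2 ⟨he, hx⟩)

theorem inter_nonempty_of_edgeDeg_add_one_eq_card (he₀ : e₀ ∈ E)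
    (hdeg : edgeDeg E e₀ + 1 = E.card) (he : e ∈ E) (hne : e ≠ e₀) : (e ∩ e₀).Nonempty := by
  have hsub : E.filter (fun a => a ≠ e₀ ∧ (a ∩ e₀).Nonempty) ⊆ E.erase e₀ := fun a ha => by
    simp only [mem_filter] at ha
    exact mem_erase.2 ⟨ha.2.1, ha.1⟩
  have hcard : (E.erase e₀).card ≤ edgeDeg E e₀ := by
    rw [card_erase_of_mem he₀]
    omega
  have heq := eq_of_subset_of_card_le hsub hcard
  have : e ∈ E.filter (fun a => a ≠ e₀ ∧ (a ∩ e₀).Nonempty) := heq ▸ mem_erase.2 ⟨hne, he⟩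
  exact (mem_filter.1 this).2.2

theorem hyperDeg_eq_of_notMem [Fintype V] {k : ℕ} (huni : ∀ e ∈ E, e.card = k)
    (hV : Fintype.card V = k ^ 2) (hEcard : E.card = k ^ 2 + 1) (he₀card : e₀.card = k)
    (hdeg₀ : ∀ x ∈ e₀, hyperDeg E x = k + 1) (hdeg : ∀ x : V, x ∉ e₀ → k ≤ hyperDeg E x)
    {x : V} (hx : x ∉ e₀) : hyperDeg E x = k := by
  have htotal : ∑ x, hyperDeg E x = (k ^ 2 + 1) * k := by
    rw [sum_hyperDeg, sum_congr rfl huni, sum_const, hEcard, smul_eq_mul]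
  have hon : ∑ x ∈ e₀, hyperDeg E x = k * (k + 1) := by
    rw [sum_congr rfl hdeg₀, sum_const, he₀card, smul_eq_mul]
  have hoff : ∑ x ∈ univ \ e₀, hyperDeg E x = ∑ _x ∈ univ \ e₀, k := by
    have hsplit := sum_sdiff (f := hyperDeg E) (subset_univ e₀)
    rw [htotal, hon] at hsplit
    rw [sum_const, card_univ_sdiff, hV, he₀card, smul_eq_mul]
    have hk : k ≤ k ^ 2 := Nat.le_self_pow two_ne_zero k
    zify [hk] at hsplit ⊢
    linear_combination hsplit
  have hle : ∀ y ∈ univ \ e₀, k ≤ hyperDeg E y := fun y hy => hdeg y (mem_sdiff.1 hy).2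
  exact ((sum_eq_sum_iff_of_le hle).1 hoff.symm x (mem_sdiff.2 ⟨mem_univ x, hx⟩)).symm

end

theorem stmt13_general {V : Type*} [Fintype V] [DecidableEq V] (k : ℕ)
    (E : Finset (Finset V)) (e₀ : Finset V)
    (hlin : Linear E) (huni : ∀ e ∈ E, e.card = k)
    (hV : Fintype.card V = k ^ 2) (hEcard : E.card = k ^ 2 + 1)
    (he₀ : e₀ ∈ E) (hdeg₀ : ∀ x ∈ e₀, hyperDeg E x = k + 1)
    (hdeg : ∀ x : V, x ∉ e₀ → k ≤ hyperDeg E x) :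
    ∀ e ∈ E, e ≠ e₀ → edgeDeg E e = k ^ 2 - k + 1 := by
  intro e he hne
  have he₀card := huni e₀ he₀
  have hdegk : ∀ x ∉ e₀, hyperDeg E x = k :=
    fun x hx => hyperDeg_eq_of_notMem huni hV hEcard he₀card hdeg₀ hdeg hx
  have hedgeDeg₀ : edgeDeg E e₀ + 1 = E.card := by
    have h := hlin.edgeDeg_add_card he₀
    rw [sum_congr rfl hdeg₀, sum_const, he₀card, smul_eq_mul] at h
    rw [hEcard]
    nlinarith
  have hmeet : (e ∩ e₀).card = 1 :=
    le_antisymm (hlin e he e₀ he₀ hne)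
      (card_pos.2 (inter_nonempty_of_edgeDeg_add_one_eq_card he₀ hedgeDeg₀ he hne))
  have hsum : ∑ x ∈ e, hyperDeg E x = k * k + 1 := by
    calc ∑ x ∈ e, hyperDeg E x = ∑ x ∈ e, (k + if x ∈ e₀ then 1 else 0) :=
          sum_congr rfl fun x _ => by
            split_ifs with hx
            exacts [hdeg₀ x hx, hdegk x hx]
      _ = k * k + 1 := by
          rw [sum_add_distrib, sum_const, huni e he, sum_boole, filter_mem_eq_inter, hmeet]
          simp
  have h := hlin.edgeDeg_add_card he
  rw [hsum, huni e he] at h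
  have := Nat.le_mul_self k
  rw [sq]
  omega

theorem stmt13 {V : Type*} [Fintype V] [DecidableEq V] (k : ℕ) (hk : 2 ≤ k)
    (E : Finset (Finset V)) (e₀ : Finset V)
    (hlin : Linear E) (huni : ∀ e ∈ E, e.card = k)
    (hV : Fintype.card V = k ^ 2) (hEcard : E.card = k ^ 2 + 1)
    (he₀ : e₀ ∈ E) (hdeg₀ : ∀ x ∈ e₀, hyperDeg E x = k + 1)
    (hdeg : ∀ x : V, x ∉ e₀ → k ≤ hyperDeg E x) :
    ∀ e ∈ E, e ≠ e₀ → edgeDeg E e = k ^ 2 - k + 1 :=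
  stmt13_general k E e₀ hlin huni hV hEcard he₀ hdeg₀ hdeg
end

section
/- For every prime power k ≥ 2 there exists a hypergraph H in the class ℋ_k whose chromatic index satisfies q(H) = k + 1. -/
open Finset

variable {V : Type*}

set_option linter.unusedSectionVars false

section MyAux

variable {F : Type} [Field F] [Fintype F] [DecidableEq F] {n : ℕ} (φ : F × F ≃ Fin n)

def myLine (a b : F) : Finset (Fin n) :=
  univ.filter fun z => (φ.symm z).2 = a * (φ.symm z).1 + b

def myE0 : Finset (Fin n) :=
  univ.filter fun z => (φ.symm z).1 = 0

def myEE : Finset (Finset (Fin n)) :=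
  insert (myE0 φ) ((univ : Finset (F × F)).image fun ab => myLine φ ab.1 ab.2)

lemma mem_myLine {z : Fin n} {a b : F} :
    z ∈ myLine φ a b ↔ (φ.symm z).2 = a * (φ.symm z).1 + b := by
  simp [myLine]

lemma mem_myE0 {z : Fin n} : z ∈ myE0 φ ↔ (φ.symm z).1 = 0 := by
  simp [myE0]

lemma mem_myLine' (x a b : F) : φ (x, a * x + b) ∈ myLine φ a b := by
  simp [mem_myLine]

lemma mem_myE0' (y : F) : φ (0, y) ∈ myE0 φ := by
  simp [mem_myE0]

lemma myLine_inj : Function.Injective (fun ab : F × F => myLine φ ab.1 ab.2) := by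
  rintro ⟨a, b⟩ ⟨a', b'⟩ h
  simp only at h
  have h0 : φ ((0 : F), b) ∈ myLine φ a' b' := by
    rw [← h]; simpa using mem_myLine' φ 0 a b
  have h1 : φ ((1 : F), a + b) ∈ myLine φ a' b' := by
    rw [← h]; simpa using mem_myLine' φ 1 a b
  rw [mem_myLine] at h0 h1
  simp only [Equiv.symm_apply_apply] at h0 h1
  have hb : b = b' := by linear_combination h0
  have ha : a = a' := by linear_combination h1 - h0
  simp [ha, hb]

lemma myE0_ne_myLine (a b : F) : myE0 φ ≠ myLine φ a b := by
  intro h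
  have h0 : φ ((0 : F), (0 : F)) ∈ myLine φ a b := by rw [← h]; exact mem_myE0' φ 0
  have h1 : φ ((0 : F), (1 : F)) ∈ myLine φ a b := by rw [← h]; exact mem_myE0' φ 1
  rw [mem_myLine] at h0 h1
  simp only [Equiv.symm_apply_apply] at h0 h1
  simp only [mul_zero, zero_add] at h0 h1
  exact one_ne_zero (h1.trans h0.symm)

lemma myLine_eq_image (a b : F) :
    myLine φ a b = univ.image (fun x : F => φ (x, a * x + b)) := by
  ext z
  simp only [mem_myLine, Finset.mem_image, Finset.mem_univ, true_and]
  constructor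
  · intro h
    exact ⟨(φ.symm z).1, by rw [← h, Prod.mk.eta, Equiv.apply_symm_apply]⟩
  · rintro ⟨x, rfl⟩; simp

lemma myE0_eq_image : myE0 φ = univ.image (fun y : F => φ (0, y)) := by
  ext z
  simp only [mem_myE0, Finset.mem_image, Finset.mem_univ, true_and]
  constructor
  · intro h
    exact ⟨(φ.symm z).2, by rw [← h, Prod.mk.eta, Equiv.apply_symm_apply]⟩
  · rintro ⟨y, rfl⟩; simp

lemma card_myLine (a b : F) : (myLine φ a b).card = Fintype.card F := by
  rw [myLine_eq_image, Finset.card_image_of_injective _ (fun x y h => by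
    have := φ.injective h; exact (Prod.mk.injEq _ _ _ _ ▸ this).1), card_univ]

lemma card_myE0 : (myE0 φ).card = Fintype.card F := by
  rw [myE0_eq_image, Finset.card_image_of_injective _ (fun x y h => by
    have := φ.injective h; exact (Prod.mk.injEq _ _ _ _ ▸ this).2), card_univ]

lemma mem_myEE {e : Finset (Fin n)} :
    e ∈ myEE φ ↔ e = myE0 φ ∨ ∃ a b : F, e = myLine φ a b := by
  simp only [myEE, Finset.mem_insert, Finset.mem_image, Finset.mem_univ, true_and]
  constructor
  · rintro (h | ⟨⟨a, b⟩, h⟩)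
    · exact Or.inl h
    · exact Or.inr ⟨a, b, h.symm⟩
  · rintro (h | ⟨a, b, h⟩)
    · exact Or.inl h
    · exact Or.inr ⟨(a, b), h.symm⟩

lemma card_myEE : (myEE φ).card = (Fintype.card F) ^ 2 + 1 := by
  rw [myEE, Finset.card_insert_of_notMem, Finset.card_image_of_injective _ (myLine_inj φ),
    card_univ, Fintype.card_prod, sq]
  intro h
  rw [Finset.mem_image] at h
  obtain ⟨⟨a, b⟩, _, h⟩ := h
  exact myE0_ne_myLine φ a b h.symm

lemma linear_myEE : Linear (myEE φ) := by
  intro e he f hf hef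
  rw [Finset.card_le_one]
  intro z hz w hw
  rw [Finset.mem_inter] at hz hw
  rw [mem_myEE] at he hf
  -- helper to finish from equal preimages
  have key : ∀ {z w : Fin n}, (φ.symm z).1 = (φ.symm w).1 → (φ.symm z).2 = (φ.symm w).2 → z = w := by
    intro z w h1 h2
    exact φ.symm.injective (Prod.ext h1 h2)
  have lineline : ∀ (a b a' b' : F) (z w : Fin n), myLine φ a b ≠ myLine φ a' b' →
      z ∈ myLine φ a b → z ∈ myLine φ a' b' → w ∈ myLine φ a b → w ∈ myLine φ a' b' → z = w := by
    intro a b a' b' z w hne hz1 hz2 hw1 hw2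
    rw [mem_myLine] at hz1 hz2 hw1 hw2
    by_cases ha : a = a'
    · subst ha
      have hb : b = b' := add_left_cancel (hz1.symm.trans hz2)
      exact absurd (by rw [hb]) hne
    · have h1 : (a - a') * (φ.symm z).1 = b' - b := by linear_combination hz2 - hz1
      have h2 : (a - a') * (φ.symm w).1 = b' - b := by linear_combination hw2 - hw1
      have hfst : (φ.symm z).1 = (φ.symm w).1 :=
        mul_left_cancel₀ (sub_ne_zero.2 ha) (h1.trans h2.symm)
      exact key hfst (by rw [hz1, hw1, hfst])
  have e0line : ∀ (a b : F) (z w : Fin n), z ∈ myE0 φ → z ∈ myLine φ a b →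
      w ∈ myE0 φ → w ∈ myLine φ a b → z = w := by
    intro a b z w hz1 hz2 hw1 hw2
    rw [mem_myE0] at hz1 hw1
    rw [mem_myLine] at hz2 hw2
    exact key (hz1.trans hw1.symm) (by rw [hz2, hw2, hz1, hw1])
  obtain (rfl | ⟨a, b, rfl⟩) := he <;> obtain (rfl | ⟨a', b', rfl⟩) := hf
  · exact absurd rfl hef
  · exact e0line a' b' z w hz.1 hz.2 hw.1 hw.2
  · exact e0line a b z w hz.2 hz.1 hw.2 hw.1
  · exact lineline a b a' b' z w hef hz.1 hz.2 hw.1 hw.2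


lemma hyperDeg_myEE (z : Fin n) :
    hyperDeg (myEE φ) z = Fintype.card F + (if (φ.symm z).1 = 0 then 1 else 0) := by
  have himg : (((univ : Finset (F × F)).image fun ab => myLine φ ab.1 ab.2).filter
        (fun e => z ∈ e))
      = (((univ : Finset (F × F)).filter fun ab => z ∈ myLine φ ab.1 ab.2).image
        (fun ab => myLine φ ab.1 ab.2)) := by
    ext e
    simp only [Finset.mem_filter, Finset.mem_image, Finset.mem_univ, true_and]
    constructor
    · rintro ⟨⟨ab, rfl⟩, hze⟩; exact ⟨ab, hze, rfl⟩
    · rintro ⟨ab, hze, rfl⟩; exact ⟨⟨ab, rfl⟩, hze⟩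
  have hfilt : ((univ : Finset (F × F)).filter fun ab => z ∈ myLine φ ab.1 ab.2)
      = (univ : Finset F).image (fun a => (a, (φ.symm z).2 - a * (φ.symm z).1)) := by
    ext ab
    simp only [Finset.mem_filter, Finset.mem_univ, true_and, Finset.mem_image,
      mem_myLine, Prod.ext_iff]
    constructor
    · intro h
      exact ⟨ab.1, rfl, by rw [h]; ring⟩
    · rintro ⟨a, ha, hb⟩
      subst ha
      rw [← hb]; ring
  have hT : ((((univ : Finset (F × F)).image fun ab => myLine φ ab.1 ab.2)).filter
      (fun e => z ∈ e)).card = Fintype.card F := by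
    rw [himg, Finset.card_image_of_injective _ (myLine_inj φ), hfilt,
      Finset.card_image_of_injective _ (fun x y h => (Prod.ext_iff.1 h).1), card_univ]
  have he0 : myE0 φ ∉ (((univ : Finset (F × F)).image fun ab => myLine φ ab.1 ab.2)).filter
      (fun e => z ∈ e) := by
    intro hmem
    have := (Finset.mem_filter.1 hmem).1
    rw [Finset.mem_image] at this
    obtain ⟨ab, -, h⟩ := this
    exact myE0_ne_myLine φ ab.1 ab.2 h.symm
  unfold hyperDeg
  rw [myEE, Finset.filter_insert]
  by_cases h0 : (φ.symm z).1 = 0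
  · rw [if_pos ((mem_myE0 φ).2 h0), if_pos h0, Finset.card_insert_of_notMem he0, hT]
  · rw [if_neg (fun h => h0 ((mem_myE0 φ).1 h)), if_neg h0, hT, add_zero]

noncomputable def myColor : Finset (Fin n) → Fin (Fintype.card F + 1) :=
  fun e => if h : ∃ ab : F × F, myLine φ ab.1 ab.2 = e then
    ((Fintype.equivFin F) h.choose.1).castSucc else Fin.last _

lemma myColor_line (a b : F) : myColor φ (myLine φ a b) = ((Fintype.equivFin F) a).castSucc := by
  have h : ∃ ab : F × F, myLine φ ab.1 ab.2 = myLine φ a b := ⟨(a, b), rfl⟩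
  rw [myColor, dif_pos h]
  have hch : h.choose = (a, b) := myLine_inj φ h.choose_spec
  rw [hch]

lemma myColor_e0 : myColor φ (myE0 φ) = Fin.last _ := by
  rw [myColor, dif_neg]
  rintro ⟨ab, h⟩
  exact myE0_ne_myLine φ ab.1 ab.2 h.symm

lemma myLine_disj (a b b' : F) (h : b ≠ b') : ¬ (myLine φ a b ∩ myLine φ a b').Nonempty := by
  rintro ⟨z, hz⟩
  rw [Finset.mem_inter, mem_myLine, mem_myLine] at hz
  exact h (add_left_cancel (hz.1.symm.trans hz.2))

lemma colorable_myEE : ColorableWith (myEE φ) (Fintype.card F + 1) := by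
  refine ⟨myColor φ, ?_⟩
  intro e he f hf hef hne
  rw [mem_myEE] at he hf
  obtain (rfl | ⟨a, b, rfl⟩) := he <;> obtain (rfl | ⟨a', b', rfl⟩) := hf
  · exact absurd rfl hef
  · rw [myColor_e0, myColor_line]; exact (Fin.castSucc_lt_last _).ne'
  · rw [myColor_line, myColor_e0]; exact (Fin.castSucc_lt_last _).ne
  · rw [myColor_line, myColor_line]
    have ha : a ≠ a' := by
      rintro rfl
      exact myLine_disj φ a b b' (fun hb => hef (by rw [hb])) hne
    intro h
    exact ha ((Fintype.equivFin F).injective (Fin.castSucc_injective _ h))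

lemma lower_myEE (q : ℕ) (h : ColorableWith (myEE φ) q) : Fintype.card F + 1 ≤ q := by
  obtain ⟨c, hc⟩ := h
  set S : Finset (Finset (Fin n)) :=
    insert (myE0 φ) ((univ : Finset F).image fun a => myLine φ a 0) with hS
  have hlinj : Function.Injective (fun a : F => myLine φ a 0) := by
    intro x y hxy
    have : ((x, (0 : F)) : F × F) = (y, 0) := myLine_inj φ hxy
    exact (Prod.ext_iff.1 this).1
  have hsub : S ⊆ myEE φ := by
    intro e he
    rw [hS, Finset.mem_insert] at he
    rw [mem_myEE]
    obtain (rfl | he) := he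
    · exact Or.inl rfl
    · rw [Finset.mem_image] at he
      obtain ⟨a, -, rfl⟩ := he
      exact Or.inr ⟨a, 0, rfl⟩
  have hz0 : ∀ e ∈ S, φ ((0 : F), (0 : F)) ∈ e := by
    intro e he
    rw [hS, Finset.mem_insert] at he
    obtain (rfl | he) := he
    · exact mem_myE0' φ 0
    · rw [Finset.mem_image] at he
      obtain ⟨a, -, rfl⟩ := he
      simpa using mem_myLine' φ 0 a 0
  have hcardS : S.card = Fintype.card F + 1 := by
    rw [hS, Finset.card_insert_of_notMem, Finset.card_image_of_injective _ hlinj, card_univ]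
    intro hmem
    rw [Finset.mem_image] at hmem
    obtain ⟨a, -, h⟩ := hmem
    exact myE0_ne_myLine φ a 0 h.symm
  have hinj : Set.InjOn c S := by
    intro e he f hf hcef
    by_contra hne
    exact hc e (hsub he) f (hsub hf) hne
      ⟨φ (0, 0), Finset.mem_inter.2 ⟨hz0 e he, hz0 f hf⟩⟩ hcef
  calc Fintype.card F + 1 = S.card := hcardS.symm
    _ = (S.image c).card := (Finset.card_image_of_injOn hinj).symm
    _ ≤ Fintype.card (Fin q) := Finset.card_le_univ _
    _ = q := Fintype.card_fin q

lemma chrom_myEE : chromIndex (myEE φ) = Fintype.card F + 1 := by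
  have h1 : ColorableWith (myEE φ) (Fintype.card F + 1) := colorable_myEE φ
  refine le_antisymm (Nat.sInf_le h1) ?_
  exact lower_myEE φ _ (Nat.sInf_mem (⟨_, h1⟩ : {q | ColorableWith (myEE φ) q}.Nonempty))


end MyAux

theorem stmt14 (k : ℕ) (hk : 2 ≤ k)
    (hpp : ∃ p m : ℕ, p.Prime ∧ 1 ≤ m ∧ k = p ^ m) :
    ∃ E : Finset (Finset (Fin (k ^ 2))),
      Linear E ∧ (∀ e ∈ E, e.card = k) ∧ E.card = k ^ 2 + 1 ∧
      (∃ e₀ ∈ E, (∀ x ∈ e₀, hyperDeg E x = k + 1) ∧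
        ∀ x : Fin (k ^ 2), x ∉ e₀ → k ≤ hyperDeg E x) ∧
      chromIndex E = k + 1 := by
  obtain ⟨p, m, hp, hm, rfl⟩ := hpp
  haveI := Fact.mk hp
  letI : DecidableEq (GaloisField p m) := Classical.decEq _
  letI : Fintype (GaloisField p m) := Fintype.ofFinite _
  have hcard : Fintype.card (GaloisField p m) = p ^ m := by
    rw [← Nat.card_eq_fintype_card]; exact GaloisField.card p m (by omega)
  have hc2 : Fintype.card (GaloisField p m × GaloisField p m) = (p ^ m) ^ 2 := by
    rw [Fintype.card_prod, hcard]; ring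
  let φ : GaloisField p m × GaloisField p m ≃ Fin ((p ^ m) ^ 2) :=
    Fintype.equivFinOfCardEq hc2
  refine ⟨myEE φ, linear_myEE φ, ?_, ?_, ⟨myE0 φ, (mem_myEE φ).2 (Or.inl rfl), ?_, ?_⟩, ?_⟩
  · intro e he
    rw [mem_myEE] at he
    obtain (rfl | ⟨a, b, rfl⟩) := he
    · rw [card_myE0, hcard]
    · rw [card_myLine, hcard]
  · rw [card_myEE, hcard]
  · intro x hx
    rw [hyperDeg_myEE, if_pos ((mem_myE0 φ).1 hx), hcard]
  · intro x hx
    rw [hyperDeg_myEE, if_neg (fun h => hx ((mem_myE0 φ).2 h)), hcard, add_zero]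
  · rw [chrom_myEE, hcard]
end

section
/- Every hypergraph H in the class ℋ_2 has chromatic index q(H) = 3, and any two hypergraphs in ℋ_2 are isomorphic (i.e. ℋ_2 contains a single hypergraph up to isomorphism, namely the complete graph K₄ with one edge removed). -/
open Finset

variable {V : Type*}

/-!
A 2-uniform hypergraph on four vertices with five edges consists of five of the six pairs, so it
is `K₄` minus one edge, and any two of these are isomorphic since permutations act transitively on
pairs. In `K₄` minus `{a, b}`, the two other vertices span a triangle with `a`, so three colours are
needed; they suffice, using the two perfect matchings of `K₄` that avoid `{a, b}` as colour classes
and giving the edge opposite to `{a, b}` the third colour.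
-/

namespace Finset

variable {α : Type*} [DecidableEq α]

theorem exists_eq_erase_of_subset_of_card_add_one {s t : Finset α} (hst : s ⊆ t)
    (hcard : #s + 1 = #t) : ∃ a ∈ t, s = t.erase a := by
  obtain ⟨a, ha, rfl⟩ := exists_eq_insert_iff.mpr ⟨hst, hcard⟩
  exact ⟨a, mem_insert_self a s, (erase_insert ha).symm⟩

end Finset

theorem exists_equiv_image_eq {V V' : Type*} [Fintype V] [Fintype V'] [DecidableEq V']
    (h : Fintype.card V = Fintype.card V') {s : Finset V} {t : Finset V'} (hst : s.card = t.card) :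
    ∃ f : V ≃ V', s.image f = t := by
  let e₀ : V ≃ V' := Fintype.equivOfCardEq h
  have hcard : Fintype.card {x // x ∈ s.image e₀} = Fintype.card {x // x ∈ t} := by
    rw [Fintype.card_coe, Fintype.card_coe, card_image_of_injective s e₀.injective, hst]
  let σ : Equiv.Perm V' := (Fintype.equivOfCardEq hcard).extendSubtype
  refine ⟨e₀.trans σ, eq_of_subset_of_card_le ?_ ?_⟩
  · intro y hy
    obtain ⟨x, hx, rfl⟩ := mem_image.mp hy
    exact Equiv.extendSubtype_mem _ _ (mem_image_of_mem e₀ hx)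
  · rw [card_image_of_injective s (e₀.trans σ).injective, hst]

section Hypergraph

variable {V V' : Type*} [DecidableEq V] [DecidableEq V']

theorem exists_card_eq_and_eq_erase_powersetCard [Fintype V] {E : Finset (Finset V)} {k : ℕ}
    (huni : ∀ e ∈ E, e.card = k) (hcard : E.card + 1 = (Fintype.card V).choose k) :
    ∃ m : Finset V, m.card = k ∧ E = (univ.powersetCard k).erase m := by
  have hsub : E ⊆ univ.powersetCard k := fun e he =>
    mem_powersetCard.mpr ⟨subset_univ e, huni e he⟩
  obtain ⟨m, hm, hE⟩ := exists_eq_erase_of_subset_of_card_add_one hsub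
    (by rwa [card_powersetCard, card_univ])
  exact ⟨m, (mem_powersetCard.mp hm).2, hE⟩

theorem image_mem_erase_powersetCard_iff [Fintype V] [Fintype V'] (f : V ≃ V') (k : ℕ)
    (m e : Finset V) :
    e.image f ∈ (univ.powersetCard k).erase (m.image f) ↔ e ∈ (univ.powersetCard k).erase m := by
  simp [card_image_of_injective _ f.injective, (image_injective f.injective).ne_iff]

theorem exists_iso_erase_powersetCard [Fintype V] [Fintype V']
    (h : Fintype.card V = Fintype.card V') (k : ℕ) {m : Finset V} {m' : Finset V'}
    (hm : m.card = m'.card) :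
    ∃ f : V ≃ V', ∀ e : Finset V,
      e ∈ (univ.powersetCard k).erase m ↔ e.image f ∈ (univ.powersetCard k).erase m' := by
  obtain ⟨f, rfl⟩ := exists_equiv_image_eq h hm
  exact ⟨f, fun e => (image_mem_erase_powersetCard_iff f k m e).symm⟩

theorem ColorableWith.comap {E : Finset (Finset V)} {E' : Finset (Finset V')} {q : ℕ}
    {f : V → V'} (hf : Function.Injective f) (hE : ∀ e ∈ E, e.image f ∈ E')
    (h : ColorableWith E' q) : ColorableWith E q := by
  obtain ⟨c, hc⟩ := h
  exact ⟨fun e => c (e.image f), fun e he g hg hne hint =>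
    hc _ (hE e he) _ (hE g hg) ((image_injective hf).ne hne)
      ((hint.image f).mono (image_inter_subset f e g))⟩

theorem ColorableWith.card_le {E T : Finset (Finset V)} {q : ℕ} (h : ColorableWith E q)
    (hTE : T ⊆ E) (hT : (T : Set (Finset V)).Pairwise fun e f => (e ∩ f).Nonempty) :
    T.card ≤ q := by
  obtain ⟨c, hc⟩ := h
  calc T.card ≤ (univ : Finset (Fin q)).card :=
        card_le_card_of_injOn c (fun _ _ => mem_univ _) fun e he f hf hcef => by
          by_contra hne
          exact hc e (hTE he) f (hTE hf) hne (hT he hf hne) hcef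
    _ = q := card_fin q

theorem chromIndex_eq_of_equiv {E : Finset (Finset V)} {E' : Finset (Finset V')} (f : V ≃ V')
    (hf : ∀ e : Finset V, e ∈ E ↔ e.image f ∈ E') : chromIndex E = chromIndex E' := by
  have hsymm : ∀ e' ∈ E', e'.image f.symm ∈ E := fun e' he' =>
    (hf _).mpr (by rwa [image_image, f.self_comp_symm, image_id])
  exact congrArg sInf (Set.ext fun q =>
    ⟨ColorableWith.comap f.symm.injective hsymm, ColorableWith.comap f.injective (hf · |>.mp)⟩)

end Hypergraph

def k4MinusEdge : Finset (Finset (Fin 4)) := (univ.powersetCard 2).erase {0, 1}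

theorem colorableWith_three_k4MinusEdge : ColorableWith k4MinusEdge 3 :=
  ⟨fun e => if e = {0, 2} ∨ e = {1, 3} then 0 else if e = {0, 3} ∨ e = {1, 2} then 1 else 2,
    by decide⟩

theorem chromIndex_k4MinusEdge : chromIndex k4MinusEdge = 3 := by
  refine le_antisymm (Nat.sInf_le colorableWith_three_k4MinusEdge)
    (le_csInf ⟨3, colorableWith_three_k4MinusEdge⟩ fun q hq => ?_)
  exact hq.card_le (T := {{0, 2}, {0, 3}, {2, 3}}) (by decide) (by simp [Set.pairwise_insert])

theorem stmt15_general {V V' : Type*} [Fintype V] [DecidableEq V] [Fintype V'] [DecidableEq V']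
    (E : Finset (Finset V)) (E' : Finset (Finset V'))
    (huni : ∀ e ∈ E, e.card = 2)
    (hV : Fintype.card V = 4) (hEcard : E.card = 5)
    (huni' : ∀ e ∈ E', e.card = 2)
    (hV' : Fintype.card V' = 4) (hEcard' : E'.card = 5) :
    chromIndex E = 3 ∧ ∃ f : V ≃ V', ∀ e : Finset V, e ∈ E ↔ e.image f ∈ E' := by
  obtain ⟨m, hm, rfl⟩ :=
    exists_card_eq_and_eq_erase_powersetCard huni (by rw [hEcard, hV]; rfl)
  obtain ⟨m', hm', rfl⟩ :=
    exists_card_eq_and_eq_erase_powersetCard huni' (by rw [hEcard', hV']; rfl)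
  obtain ⟨g, hg⟩ := exists_iso_erase_powersetCard (m' := ({0, 1} : Finset (Fin 4)))
    (by rw [hV, Fintype.card_fin]) 2 (by rw [hm]; rfl)
  exact ⟨(chromIndex_eq_of_equiv g hg).trans chromIndex_k4MinusEdge,
    exists_iso_erase_powersetCard (hV.trans hV'.symm) 2 (hm.trans hm'.symm)⟩

theorem stmt15 {V V' : Type*} [Fintype V] [DecidableEq V] [Fintype V'] [DecidableEq V']
    (E : Finset (Finset V)) (E' : Finset (Finset V'))
    (hlin : Linear E) (huni : ∀ e ∈ E, e.card = 2)
    (hV : Fintype.card V = 4) (hEcard : E.card = 5)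
    (he₀ : ∃ e₀ ∈ E, (∀ x ∈ e₀, hyperDeg E x = 3) ∧
      ∀ x : V, x ∉ e₀ → 2 ≤ hyperDeg E x)
    (hlin' : Linear E') (huni' : ∀ e ∈ E', e.card = 2)
    (hV' : Fintype.card V' = 4) (hEcard' : E'.card = 5)
    (he₀' : ∃ e₀ ∈ E', (∀ x ∈ e₀, hyperDeg E' x = 3) ∧
      ∀ x : V', x ∉ e₀ → 2 ≤ hyperDeg E' x) :
    chromIndex E = 3 ∧ ∃ f : V ≃ V', ∀ e : Finset V, e ∈ E ↔ e.image f ∈ E' :=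
  stmt15_general E E' huni hV hEcard huni' hV' hEcard'
end

section
/- For every prime power k ≥ 3 there exists a hypergraph H' in the class ℋ_k whose chromatic index satisfies q(H') = 2k − 1. -/
open Finset

variable {V : Type*}

/-!
Over a field `F` with `k` elements take, in the affine plane `F × F`, the axis `y = 0` (this is
`e₀`), the diagonal `y = x`, the lines `y = m x + b` with `m, b ≠ 0`, the verticals `x = a ≠ 0`,
and for every `y ≠ 0` the row at height `y` with its point `(y, y)` traded for the origin. These
`k² + 1` sets of size `k` pairwise meet at most once, so no vertex lies on more than `k + 1` of
them. Of the `k + 1` affine lines through a vertex other than the origin (a row standing for its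
bent row) at most one fails to be an edge through it, and none on the axis; the origin lies on
the axis, the diagonal and all bent rows.

Colouring the lines by slope and giving the bent row at height `a` the colour of the vertical
`x = a` uses `2k - 1` colours. Conversely, the `k + 1` edges through the origin get distinct
colours. The axis meets every edge and the edges missing a bent row all pass through one point,
so each of these colours is used at most twice, the diagonal's colour at most `k` times, and every
other colour class misses the origin and so has at most `k - 1` edges. Counting the `k² + 1`
edges then forces `2k - 1` colours.
-/

theorem Finset.card_mul_le_card_of_pairwiseDisjoint {ι α : Type*} [DecidableEq α]
    {s : Finset ι} {f : ι → Finset α} {t : Finset α} {r : ℕ}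
    (hf : (s : Set ι).PairwiseDisjoint f) (hr : ∀ i ∈ s, r ≤ (f i).card)
    (ht : ∀ i ∈ s, f i ⊆ t) : s.card * r ≤ t.card :=
  calc s.card * r = ∑ _ ∈ s, r := by rw [sum_const, smul_eq_mul]
    _ ≤ ∑ i ∈ s, (f i).card := sum_le_sum hr
    _ = (s.biUnion f).card := (card_biUnion hf).symm
    _ ≤ t.card := card_le_card (biUnion_subset.mpr ht)

theorem pos_of_card_eq_sq [Fintype V] {k : ℕ} (hV : Fintype.card V = k ^ 2) (x : V) : 0 < k := by
  have := Fintype.card_pos_iff.mpr ⟨x⟩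
  rw [hV] at this
  exact Nat.pos_of_ne_zero (by rintro rfl; simp at this)

section Hypergraph

variable [DecidableEq V]

/-- Membership in the class `ℋ_k`; the condition `|V| = k²` is left to the vertex type. -/
def InClassH (k : ℕ) (E : Finset (Finset V)) : Prop :=
  Linear E ∧ (∀ e ∈ E, e.card = k) ∧ E.card = k ^ 2 + 1 ∧
    ∃ e₀ ∈ E, (∀ x ∈ e₀, hyperDeg E x = k + 1) ∧ ∀ x, x ∉ e₀ → k ≤ hyperDeg E x

variable {E : Finset (Finset V)}

theorem hyperDeg_mul_le_of_linear [Fintype V] {k : ℕ} (hE : Linear E)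
    (hk : ∀ e ∈ E, e.card = k) (x : V) :
    hyperDeg E x * (k - 1) ≤ Fintype.card V - 1 := by
  rw [← card_univ, ← card_erase_of_mem (mem_univ x)]
  refine card_mul_le_card_of_pairwiseDisjoint (f := fun e => e.erase x) ?_ ?_ ?_
  · intro e he f hf hef
    simp only [coe_filter, Set.mem_ofPred_eq] at he hf
    rw [Function.onFun, disjoint_left]
    intro y hye hyf
    rw [mem_erase] at hye hyf
    exact hye.1 (card_le_one.mp (hE e he.1 f hf.1 hef) y (mem_inter.mpr ⟨hye.2, hyf.2⟩) x
      (mem_inter.mpr ⟨he.2, hf.2⟩))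
  · intro e he
    rw [mem_filter] at he
    rw [card_erase_of_mem he.2, hk e he.1]
  · intro e _
    exact erase_subset_erase x (subset_univ e)

theorem colorableWith_of_cover {ι : Type*} [Fintype ι] [Nonempty ι] (M : ι → Set (Finset V))
    (hM : ∀ i, (M i).PairwiseDisjoint id) (hE : ∀ e ∈ E, ∃ i, e ∈ M i) :
    ColorableWith E (Fintype.card ι) := by
  choose! col hcol using hE
  refine ⟨fun e => Fintype.equivFin ι (col e), fun e he f hf hef hint hc => ?_⟩
  have hf' : f ∈ M (col e) := (Fintype.equivFin ι).injective hc ▸ hcol f hf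
  exact hint.ne_empty (disjoint_iff_inter_eq_empty.mp (hM (col e) (hcol e he) hf' hef))

variable {q : ℕ} {c : Finset V → Fin q}

theorem pairwiseDisjoint_colorClass
    (hc : ∀ e ∈ E, ∀ f ∈ E, e ≠ f → (e ∩ f).Nonempty → c e ≠ c f) (i : Fin q) :
    ((E.filter (c · = i) : Finset (Finset V)) : Set (Finset V)).PairwiseDisjoint id := by
  intro e he f hf hef
  simp only [coe_filter, Set.mem_ofPred_eq] at he hf
  rw [Function.onFun, id, id, disjoint_iff_inter_eq_empty, ← not_nonempty_iff_eq_empty]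
  exact fun hint => hc e he.1 f hf.1 hef hint (he.2.trans hf.2.symm)

theorem injOn_color_of_mem
    (hc : ∀ e ∈ E, ∀ f ∈ E, e ≠ f → (e ∩ f).Nonempty → c e ≠ c f) (x : V) :
    Set.InjOn c (E.filter (x ∈ ·) : Finset (Finset V)) := by
  intro e he f hf hcef
  simp only [coe_filter, Set.mem_ofPred_eq] at he hf
  by_contra hef
  exact hc e he.1 f hf.1 hef ⟨x, mem_inter.mpr ⟨he.2, hf.2⟩⟩ hcef

theorem card_colorClass_mul_le
    (hc : ∀ e ∈ E, ∀ f ∈ E, e ≠ f → (e ∩ f).Nonempty → c e ≠ c f)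
    {k : ℕ} (hk : ∀ e ∈ E, e.card = k) {i : Fin q} {S : Finset V}
    (hS : ∀ e ∈ E, c e = i → e ⊆ S) : (E.filter (c · = i)).card * k ≤ S.card :=
  card_mul_le_card_of_pairwiseDisjoint (pairwiseDisjoint_colorClass hc i)
    (fun e he => (hk e (mem_filter.mp he).1).ge)
    (fun e he => hS e (mem_filter.mp he).1 (mem_filter.mp he).2)

theorem card_colorClass_le_two
    (hc : ∀ e ∈ E, ∀ f ∈ E, e ≠ f → (e ∩ f).Nonempty → c e ≠ c f)
    {e : Finset V} (he : e ∈ E) {p : V} (hp : ∀ f ∈ E, Disjoint e f → p ∈ f) :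
    (E.filter (c · = c e)).card ≤ 2 := by
  have hthrough : ∀ f ∈ (E.filter (c · = c e)).erase e, f ∈ E ∧ c f = c e ∧ p ∈ f := by
    intro f hf
    obtain ⟨hfe, hf⟩ := mem_erase.mp hf
    obtain ⟨hfE, hcf⟩ := mem_filter.mp hf
    refine ⟨hfE, hcf, hp f hfE ?_⟩
    rw [disjoint_iff_inter_eq_empty, ← not_nonempty_iff_eq_empty, inter_comm]
    exact fun hint => hc f hfE e he hfe hint hcf
  have hle_one : ((E.filter (c · = c e)).erase e).card ≤ 1 := by
    refine card_le_one.mpr fun f hf g hg => ?_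
    obtain ⟨hfE, hcf, hpf⟩ := hthrough f hf
    obtain ⟨hgE, hcg, hpg⟩ := hthrough g hg
    by_contra hfg
    exact hc f hfE g hgE hfg ⟨p, mem_inter.mpr ⟨hpf, hpg⟩⟩ (hcf.trans hcg.symm)
  have := pred_card_le_card_erase (s := E.filter (c · = c e)) (a := e)
  omega

variable [Fintype V] {k : ℕ}

theorem sum_card_colorClass_of_mem_le
    (hc : ∀ e ∈ E, ∀ f ∈ E, e ≠ f → (e ∩ f).Nonempty → c e ≠ c f)
    (hk : ∀ e ∈ E, e.card = k) (hV : Fintype.card V = k ^ 2) {x : V} {d : Finset V}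
    (hstar : ∀ e ∈ E, x ∈ e → e ≠ d → ∃ p, ∀ f ∈ E, Disjoint e f → p ∈ f) :
    ∑ e ∈ E.filter (x ∈ ·), (E.filter (c · = c e)).card ≤ 2 * hyperDeg E x + (k - 2) := by
  have hterm : ∀ e ∈ E.filter (x ∈ ·),
      (E.filter (c · = c e)).card ≤ 2 + if e = d then k - 2 else 0 := by
    intro e he
    obtain ⟨heE, hxe⟩ := mem_filter.mp he
    split_ifs with hed
    · have hmul : (E.filter (c · = c e)).card * k ≤ k * k := by
        simpa [hV, sq] using card_colorClass_mul_le hc hk (i := c e) (fun f _ _ => subset_univ f)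
      have := Nat.le_of_mul_le_mul_right hmul (pos_of_card_eq_sq hV x)
      omega
    · obtain ⟨p, hp⟩ := hstar e heE hxe hed
      exact (card_colorClass_le_two hc heE hp).trans (Nat.le_add_right 2 0)
  calc ∑ e ∈ E.filter (x ∈ ·), (E.filter (c · = c e)).card
      ≤ ∑ e ∈ E.filter (x ∈ ·), (2 + if e = d then k - 2 else 0) := sum_le_sum hterm
    _ ≤ 2 * hyperDeg E x + (k - 2) := by
      rw [sum_add_distrib, sum_const, smul_eq_mul, sum_ite_eq']
      unfold hyperDeg
      split_ifs <;> omega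

theorem card_colorClass_le_of_notMem
    (hc : ∀ e ∈ E, ∀ f ∈ E, e ≠ f → (e ∩ f).Nonempty → c e ≠ c f)
    (hk : ∀ e ∈ E, e.card = k) (hV : Fintype.card V = k ^ 2) {x : V} {i : Fin q}
    (hi : i ∉ (E.filter (x ∈ ·)).image c) : (E.filter (c · = i)).card ≤ k - 1 := by
  have havoid : ∀ e ∈ E, c e = i → e ⊆ univ.erase x := by
    intro e he hce y hy
    exact mem_erase.mpr
      ⟨fun hyx => hi (mem_image.mpr ⟨e, mem_filter.mpr ⟨he, hyx ▸ hy⟩, hce⟩), mem_univ y⟩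
  have hmul := card_colorClass_mul_le hc hk havoid
  rw [card_erase_of_mem (mem_univ x), card_univ, hV] at hmul
  have hk0 := pos_of_card_eq_sq hV x
  have hlt : (E.filter (c · = i)).card * k < k * k := by
    have := Nat.mul_pos hk0 hk0
    rw [sq] at hmul
    omega
  have := Nat.lt_of_mul_lt_mul_right hlt
  omega

theorem two_mul_sub_one_le_of_colorableWith (hk3 : 3 ≤ k) (hk : ∀ e ∈ E, e.card = k)
    (hV : Fintype.card V = k ^ 2) (hE : E.card = k ^ 2 + 1) {x : V} (hx : hyperDeg E x = k + 1)
    {d : Finset V} (hstar : ∀ e ∈ E, x ∈ e → e ≠ d → ∃ p, ∀ f ∈ E, Disjoint e f → p ∈ f)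
    (hcol : ColorableWith E q) : 2 * k - 1 ≤ q := by
  obtain ⟨c, hc⟩ := hcol
  set T := (E.filter (x ∈ ·)).image c
  have hT : T.card = k + 1 := by rw [card_image_of_injOn (injOn_color_of_mem hc x)]; exact hx
  have hTq : k + 1 ≤ q := by simpa [hT] using card_le_univ T
  have hsum : k ^ 2 + 1 = ∑ i ∈ T, (E.filter (c · = i)).card
      + ∑ i ∈ univ \ T, (E.filter (c · = i)).card := by
    rw [← hE, card_eq_sum_card_fiberwise (fun e _ => mem_univ (c e)), add_comm,
      sum_sdiff (subset_univ T)]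
  have hTsum : ∑ i ∈ T, (E.filter (c · = i)).card ≤ 2 * (k + 1) + (k - 2) := by
    rw [sum_image (injOn_color_of_mem hc x), ← hx]
    exact sum_card_colorClass_of_mem_le hc hk hV hstar
  have hrest : ∑ i ∈ univ \ T, (E.filter (c · = i)).card ≤ (q - (k + 1)) * (k - 1) := by
    calc ∑ i ∈ univ \ T, (E.filter (c · = i)).card ≤ (univ \ T).card * (k - 1) :=
          sum_le_card_nsmul _ _ _ fun i hi =>
            card_colorClass_le_of_notMem hc hk hV (mem_sdiff.mp hi).2
      _ = (q - (k + 1)) * (k - 1) := by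
          rw [card_sdiff_of_subset (subset_univ T), hT, card_univ, Fintype.card_fin]
  -- `k² + 1 ≤ 3k + (q - k - 1)(k - 1)` forces `q - k - 1 ≥ k - 2`
  obtain ⟨r, rfl⟩ := Nat.exists_eq_add_of_le hTq
  obtain ⟨j, rfl⟩ := Nat.exists_eq_add_of_le hk3
  rw [Nat.add_sub_cancel_left] at hrest
  by_contra! hr
  have : r * (3 + j - 1) ≤ j * (j + 2) := Nat.mul_le_mul (by omega) (by omega)
  rw [show 3 + j - 2 = j + 1 by omega] at hTsum
  nlinarith

end Hypergraph

section Transport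

variable {W : Type*} [DecidableEq V] [DecidableEq W] (φ : V ≃ W) {E : Finset (Finset V)}

theorem Linear.map (hE : Linear E) : Linear (E.map φ.finsetCongr.toEmbedding) := by
  simp only [Linear, mem_map, Equiv.coe_toEmbedding, Equiv.finsetCongr_apply]
  rintro _ ⟨e, he, rfl⟩ _ ⟨f, hf, rfl⟩ hef
  rw [← map_inter, card_map]
  exact hE e he f hf (fun h => hef (h ▸ rfl))

theorem hyperDeg_map (x : V) :
    hyperDeg (E.map φ.finsetCongr.toEmbedding) (φ x) = hyperDeg E x := by
  simp only [hyperDeg, filter_map, card_map]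
  congr 2
  ext e
  simp

theorem ColorableWith.map {q : ℕ} (h : ColorableWith E q) :
    ColorableWith (E.map φ.finsetCongr.toEmbedding) q := by
  obtain ⟨c, hc⟩ := h
  refine ⟨fun t => c (φ.finsetCongr.symm t), ?_⟩
  simp only [mem_map, Equiv.coe_toEmbedding]
  rintro _ ⟨e, he, rfl⟩ _ ⟨f, hf, rfl⟩ hef hint
  simp only [Equiv.symm_apply_apply]
  refine hc e he f hf (fun h => hef (h ▸ rfl)) ?_
  simpa [← map_inter] using hint

theorem colorableWith_map_iff {q : ℕ} :
    ColorableWith (E.map φ.finsetCongr.toEmbedding) q ↔ ColorableWith E q := by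
  refine ⟨fun h => ?_, ColorableWith.map φ⟩
  have hE : (E.map φ.finsetCongr.toEmbedding).map φ.symm.finsetCongr.toEmbedding = E := by
    ext e
    simp [map_map]
  exact hE ▸ h.map φ.symm

theorem chromIndex_map : chromIndex (E.map φ.finsetCongr.toEmbedding) = chromIndex E := by
  simp only [chromIndex, colorableWith_map_iff]

theorem InClassH.map {k : ℕ} (h : InClassH k E) : InClassH k (E.map φ.finsetCongr.toEmbedding) := by
  obtain ⟨hlin, hunif, hcard, e₀, he₀, hdeg₀, hdeg⟩ := h
  refine ⟨hlin.map φ, ?_, by rw [card_map, hcard], e₀.map φ.toEmbedding, ?_, ?_, ?_⟩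
  · simp only [mem_map, Equiv.coe_toEmbedding, Equiv.finsetCongr_apply]
    rintro _ ⟨e, he, rfl⟩
    rw [card_map, hunif e he]
  · exact mem_map_of_mem _ he₀
  · simp only [mem_map, Equiv.coe_toEmbedding]
    rintro _ ⟨x, hx, rfl⟩
    rw [hyperDeg_map, hdeg₀ x hx]
  · intro y hy
    rw [← φ.apply_symm_apply y, hyperDeg_map]
    exact hdeg _ fun hx => hy (by simpa using mem_map_of_mem φ.toEmbedding hx)

end Transport


namespace BentPlane

section

variable {F : Type*} [Fintype F] [DecidableEq F]

def vertLine (a : F) : Finset (F × F) := univ.image fun y => (a, y)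

@[simp] theorem mem_vertLine {a : F} {p : F × F} : p ∈ vertLine a ↔ p.1 = a := by
  constructor
  · simp only [vertLine, mem_image, mem_univ, true_and]
    rintro ⟨y, rfl⟩
    rfl
  · intro h
    exact mem_image.mpr ⟨p.2, mem_univ _, Prod.ext h.symm rfl⟩

theorem card_vertLine (a : F) : (vertLine a).card = Fintype.card F :=
  card_image_of_injective _ fun _ _ h => (Prod.mk.inj h).2

theorem vertLine_injective : Function.Injective (vertLine : F → Finset (F × F)) := fun a a' h =>
  mem_vertLine.mp (h ▸ mem_vertLine.mpr rfl : ((a, a) ∈ vertLine a'))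

theorem card_inter_vertLine_le_one {a a' : F} (h : a ≠ a') :
    (vertLine a ∩ vertLine a').card ≤ 1 := by
  refine card_le_one.mpr fun p hp q hq => ?_
  simp only [mem_inter, mem_vertLine] at hp
  exact absurd (hp.1.symm.trans hp.2) h

end

variable {F : Type*} [Field F] [Fintype F] [DecidableEq F]

def line (m b : F) : Finset (F × F) := univ.image fun x => (x, m * x + b)

def bentRow (y : F) : Finset (F × F) := insert (0, 0) ((univ.erase y).image fun x => (x, y))

@[simp] theorem mem_line {m b : F} {p : F × F} : p ∈ line m b ↔ p.2 = m * p.1 + b := by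
  constructor
  · simp only [line, mem_image, mem_univ, true_and]
    rintro ⟨x, rfl⟩
    rfl
  · intro h
    exact mem_image.mpr ⟨p.1, mem_univ _, Prod.ext rfl h.symm⟩

@[simp] theorem mem_bentRow {y : F} {p : F × F} :
    p ∈ bentRow y ↔ p = (0, 0) ∨ (p.2 = y ∧ p.1 ≠ y) := by
  simp only [bentRow, mem_insert, mem_image, mem_erase, mem_univ, and_true]
  constructor
  · rintro (h | ⟨x, hx, rfl⟩)
    · exact Or.inl h
    · exact Or.inr ⟨rfl, hx⟩
  · rintro (h | ⟨h2, h1⟩)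
    · exact Or.inl h
    · exact Or.inr ⟨p.1, h1, by rw [← h2]⟩

theorem card_line (m b : F) : (line m b).card = Fintype.card F :=
  card_image_of_injective _ fun _ _ h => (Prod.mk.inj h).1

theorem card_bentRow {y : F} (hy : y ≠ 0) : (bentRow y).card = Fintype.card F := by
  rw [bentRow, card_insert_of_notMem (by simp [hy]),
    card_image_of_injective _ fun _ _ h => (Prod.mk.inj h).1,
    card_erase_of_mem (mem_univ y), card_univ, Nat.sub_add_cancel Fintype.card_pos]

theorem line_inj {m b m' b' : F} (h : line m b = line m' b') : m = m' ∧ b = b' := by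
  have h0 : ((0 : F), b) ∈ line m' b' := h ▸ by simp
  have h1 : ((1 : F), m + b) ∈ line m' b' := h ▸ by simp
  simp only [mem_line, mul_zero, zero_add, mul_one] at h0 h1
  exact ⟨by linear_combination h1 - h0, h0⟩

theorem bentRow_inj {y y' : F} (hy : y ≠ 0) (h : bentRow y = bentRow y') : y = y' := by
  have : ((0 : F), y) ∈ bentRow y' := h ▸ by simp [hy.symm]
  simp only [mem_bentRow, Prod.mk.injEq, true_and] at this
  exact this.elim (fun h0 => absurd h0 hy) And.left

theorem line_ne_vertLine (m b a : F) : line m b ≠ vertLine a := by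
  intro h
  have : (a, m * a + b + 1) ∈ line m b := h ▸ by simp
  simp at this

theorem line_ne_bentRow (m b : F) {y : F} (hy : y ≠ 0) : line m b ≠ bentRow y := by
  intro h
  have h0 : ((0 : F), (0 : F)) ∈ line m b := h ▸ by simp
  have hy0 : ((0 : F), y) ∈ line m b := h ▸ by simp [hy.symm]
  simp only [mem_line, mul_zero, zero_add] at h0 hy0
  exact hy (hy0.trans h0.symm)

theorem vertLine_ne_bentRow {a : F} (ha : a ≠ 0) (y : F) : vertLine a ≠ bentRow y := by
  intro h
  have : ((0 : F), (0 : F)) ∈ vertLine a := h ▸ by simp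
  exact ha (mem_vertLine.mp this).symm

def edgeOf : (F × F) ⊕ F ⊕ F → Finset (F × F) :=
  Sum.elim (fun p => line p.1 p.2) (Sum.elim bentRow vertLine)

variable (F) in
def labels : Finset ((F × F) ⊕ F ⊕ F) :=
  (insert (0, 0) (insert (1, 0) ((univ.erase 0) ×ˢ (univ.erase 0)))).disjSum
    ((univ.erase 0).disjSum (univ.erase 0))

@[simp] theorem edgeOf_inl (m b : F) : edgeOf (.inl (m, b)) = line m b := rfl

@[simp] theorem edgeOf_inr_inl (y : F) : edgeOf (.inr (.inl y) : (F × F) ⊕ F ⊕ F) = bentRow y :=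
  rfl

@[simp] theorem edgeOf_inr_inr (a : F) : edgeOf (.inr (.inr a) : (F × F) ⊕ F ⊕ F) = vertLine a :=
  rfl

@[simp] theorem inl_mem_labels {m b : F} :
    .inl (m, b) ∈ labels F ↔ m = 0 ∧ b = 0 ∨ m = 1 ∧ b = 0 ∨ m ≠ 0 ∧ b ≠ 0 := by
  simp [labels]

@[simp] theorem inr_inl_mem_labels {y : F} : .inr (.inl y) ∈ labels F ↔ y ≠ 0 := by
  simp [labels]

@[simp] theorem inr_inr_mem_labels {a : F} : .inr (.inr a) ∈ labels F ↔ a ≠ 0 := by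
  simp [labels]

variable (F) in
def edges : Finset (Finset (F × F)) := (labels F).image edgeOf

theorem forall_mem_edges {P : Finset (F × F) → Prop} :
    (∀ e ∈ edges F, P e) ↔ P (line 0 0) ∧ P (line 1 0) ∧
      (∀ m b, m ≠ 0 → b ≠ 0 → P (line m b)) ∧ (∀ y, y ≠ 0 → P (bentRow y)) ∧
      ∀ a, a ≠ 0 → P (vertLine a) := by
  simp only [edges, labels, forall_mem_image, Sum.forall, inl_mem_disjSum, inr_mem_disjSum,
    mem_insert, mem_product, mem_erase, mem_univ, and_true, edgeOf, Sum.elim_inl, Sum.elim_inr,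
    or_imp, forall_and, forall_eq, Prod.forall, and_imp, and_assoc]

theorem card_labels : (labels F).card = Fintype.card F ^ 2 + 1 := by
  rw [labels, card_disjSum, card_disjSum, card_insert_of_notMem (by simp),
    card_insert_of_notMem (by simp), card_product, card_erase_of_mem (mem_univ 0), card_univ]
  obtain ⟨j, hj⟩ := Nat.exists_eq_add_of_lt (Fintype.card_pos (α := F))
  rw [hj]
  simp only [zero_add, Nat.add_sub_cancel]
  ring

theorem edgeOf_injOn : Set.InjOn edgeOf (labels F : Set ((F × F) ⊕ F ⊕ F)) := by
  rintro (⟨m, b⟩ | y | a) hl (⟨m', b'⟩ | y' | a') hl' h <;>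
    simp only [mem_coe, inr_inl_mem_labels, inr_inr_mem_labels, edgeOf_inl, edgeOf_inr_inl,
      edgeOf_inr_inr] at hl hl' h
  · obtain ⟨rfl, rfl⟩ := line_inj h
    rfl
  · exact absurd h (line_ne_bentRow m b hl')
  · exact absurd h (line_ne_vertLine m b a')
  · exact absurd h.symm (line_ne_bentRow m' b' hl)
  · rw [bentRow_inj hl h]
  · exact absurd h.symm (vertLine_ne_bentRow hl' y)
  · exact absurd h.symm (line_ne_vertLine m' b' a)
  · exact absurd h (vertLine_ne_bentRow hl y')
  · rw [vertLine_injective h]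

theorem card_edges : (edges F).card = Fintype.card F ^ 2 + 1 := by
  rw [edges, card_image_of_injOn edgeOf_injOn, card_labels]

theorem hyperDeg_edges (p : F × F) :
    hyperDeg (edges F) p = ((labels F).filter (p ∈ edgeOf ·)).card := by
  rw [hyperDeg, edges, filter_image, card_image_of_injOn (edgeOf_injOn.mono (filter_subset _ _))]

theorem card_inter_line_le_one {m b m' b' : F} (h : (m, b) ≠ (m', b')) :
    (line m b ∩ line m' b').card ≤ 1 := by
  refine card_le_one.mpr fun p hp q hq => ?_
  simp only [mem_inter, mem_line] at hp hq
  by_cases hm : m = m'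
  · subst hm
    exact absurd (by rw [show b = b' by linear_combination hp.2 - hp.1]) h
  · have h1 : p.1 = q.1 := mul_left_cancel₀ (sub_ne_zero.mpr hm)
      (by linear_combination (hp.2 - hp.1) - (hq.2 - hq.1))
    exact Prod.ext h1 (by rw [hp.1, hq.1, h1])

theorem card_inter_line_vertLine_le_one (m b a : F) : (line m b ∩ vertLine a).card ≤ 1 := by
  refine card_le_one.mpr fun p hp q hq => ?_
  simp only [mem_inter, mem_line, mem_vertLine] at hp hq
  exact Prod.ext (hp.2.trans hq.2.symm) (by rw [hp.1, hq.1, hp.2, hq.2])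

theorem bentRow_inter_subset {y : F} {s : Finset (F × F)} (hs : (0, 0) ∉ s) :
    bentRow y ∩ s ⊆ line 0 y ∩ s := by
  intro p hp
  simp only [mem_inter, mem_bentRow, mem_line] at hp ⊢
  rcases hp with ⟨rfl | ⟨hpy, -⟩, hps⟩
  · exact absurd hps hs
  · exact ⟨by simp [hpy], hps⟩

theorem card_bentRow_inter_le_one {y : F} (hy : y ≠ 0) :
    ∀ s ∈ edges F, bentRow y ≠ s → (bentRow y ∩ s).card ≤ 1 := by
  have hO : ∀ s : Finset (F × F), (∀ p ∈ bentRow y ∩ s, p = (0, 0)) → (bentRow y ∩ s).card ≤ 1 :=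
    fun s h => card_le_one.mpr fun p hp q hq => (h p hp).trans (h q hq).symm
  rw [forall_mem_edges]
  refine ⟨fun _ => hO _ ?_, fun _ => hO _ ?_, fun m b hm hb _ => ?_, fun y' _ hne => hO _ ?_,
    fun a ha _ => ?_⟩
  · rintro p hp
    simp only [mem_inter, mem_bentRow, mem_line, zero_mul, add_zero] at hp
    rcases hp with ⟨h | ⟨hpy, -⟩, hp0⟩
    exacts [h, absurd (hpy.symm.trans hp0) hy]
  · rintro p hp
    simp only [mem_inter, mem_bentRow, mem_line, one_mul, add_zero] at hp
    rcases hp with ⟨h | ⟨hpy, hpx⟩, hpd⟩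
    exacts [h, absurd (hpd.symm.trans hpy) hpx]
  · calc (bentRow y ∩ line m b).card ≤ (line 0 y ∩ line m b).card :=
          card_le_card (bentRow_inter_subset (by simpa using hb.symm))
      _ ≤ 1 := card_inter_line_le_one fun h => hm (Prod.mk.inj h).1.symm
  · rintro p hp
    simp only [mem_inter, mem_bentRow] at hp
    rcases hp with ⟨h | ⟨hpy, -⟩, h' | ⟨hpy', -⟩⟩
    exacts [h, h, h', absurd (by rw [← hpy, hpy']) hne]
  · calc (bentRow y ∩ vertLine a).card ≤ (line 0 y ∩ vertLine a).card :=
          card_le_card (bentRow_inter_subset (by simpa using ha.symm))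
      _ ≤ 1 := card_inter_line_vertLine_le_one 0 y a

theorem linear_edges : Linear (edges F) := by
  rintro _ he _ hf hef
  obtain ⟨l, hl, rfl⟩ := mem_image.mp he
  obtain ⟨l', hl', rfl⟩ := mem_image.mp hf
  rcases l with ⟨m, b⟩ | y | a <;> rcases l' with ⟨m', b'⟩ | y' | a' <;>
    simp only [inr_inl_mem_labels, inr_inr_mem_labels, edgeOf_inl, edgeOf_inr_inl,
      edgeOf_inr_inr] at hl hl' hef ⊢
  · exact card_inter_line_le_one fun h => hef (by obtain ⟨rfl, rfl⟩ := Prod.mk.inj h; rfl)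
  · exact inter_comm (line m b) _ ▸ card_bentRow_inter_le_one hl' _ he hef.symm
  · exact card_inter_line_vertLine_le_one m b a'
  · exact card_bentRow_inter_le_one hl _ hf hef
  · exact card_bentRow_inter_le_one hl _ hf hef
  · exact card_bentRow_inter_le_one hl _ hf hef
  · exact inter_comm (line m' b') _ ▸ card_inter_line_vertLine_le_one m' b' a
  · exact inter_comm (bentRow y') _ ▸ card_bentRow_inter_le_one hl' _ he hef.symm
  · exact card_inter_vertLine_le_one fun h => hef (by rw [h])

theorem card_of_mem_edges : ∀ e ∈ edges F, e.card = Fintype.card F := by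
  rw [forall_mem_edges]
  exact ⟨card_line 0 0, card_line 1 0, fun m b _ _ => card_line m b, fun y hy => card_bentRow hy,
    fun a _ => card_vertLine a⟩

/-- The label of the affine line through `p` in direction `d` (`none` is vertical), a row off
the axis being replaced by its bent row. -/
def pencil (p : F × F) : Option F → (F × F) ⊕ F ⊕ F
  | none => .inr (.inr p.1)
  | some m => if m = 0 ∧ p.2 ≠ 0 then .inr (.inl p.2) else .inl (m, p.2 - m * p.1)

theorem bad_pencil {p : F × F} (hp : p ≠ (0, 0)) {d : Option F}
    (hd : pencil p d ∉ (labels F).filter (p ∈ edgeOf ·)) :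
    p.2 ≠ 0 ∧ d = if p.1 = 0 then none else if p.1 = p.2 then some 0 else some (p.2 / p.1) := by
  rw [mem_filter] at hd
  obtain ⟨x, y⟩ := p
  simp only [ne_eq, Prod.mk.injEq, not_and] at hp ⊢
  rcases d with _ | m
  · simp only [pencil, inr_inr_mem_labels, edgeOf_inr_inr, mem_vertLine, and_true, not_not] at hd
    exact ⟨hp hd, by rw [if_pos hd]⟩
  by_cases hm : m = 0 ∧ y ≠ 0
  · rw [pencil, if_pos hm] at hd
    simp only [inr_inl_mem_labels, edgeOf_inr_inl, mem_bentRow, true_and] at hd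
    have hxy : x = y := by
      by_contra hxy
      exact hd ⟨hm.2, Or.inr hxy⟩
    rw [if_neg (hxy ▸ hm.2), if_pos hxy, hm.1]
    exact ⟨hm.2, rfl⟩
  · rw [pencil, if_neg hm] at hd
    simp only [inl_mem_labels, edgeOf_inl, mem_line, add_sub_cancel, and_true] at hd
    have hb : y - m * x = 0 := by
      by_contra hb
      refine hd (Or.inr (Or.inr ⟨fun hm0 => hm ⟨hm0, fun hy => hb ?_⟩, hb⟩))
      rw [hm0, hy, zero_mul, sub_zero]
    have hm0 : m ≠ 0 := fun h => hd (Or.inl ⟨h, hb⟩)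
    have hm1 : m ≠ 1 := fun h => hd (Or.inr (Or.inl ⟨h, hb⟩))
    have hy : y = m * x := by linear_combination hb
    have hx : x ≠ 0 := fun hx => hp hx (by rw [hy, hx, mul_zero])
    have hxy : x ≠ y := fun hxy => hm1 (mul_right_cancel₀ hx (by rw [← hy, hxy, one_mul]))
    rw [if_neg hx, if_neg hxy, hy, mul_div_cancel_right₀ m hx]
    exact ⟨fun hy0 => hx ((mul_eq_zero.mp hy0).resolve_left hm0), rfl⟩

theorem le_hyperDeg_edges_of_ne {p : F × F} (hp : p ≠ (0, 0)) :
    Fintype.card F + (if p.2 = 0 then 1 else 0) ≤ hyperDeg (edges F) p := by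
  set good := (labels F).filter (p ∈ edgeOf ·)
  have hgood : (univ.filter (pencil p · ∈ good)).card ≤ hyperDeg (edges F) p := by
    rw [hyperDeg_edges]
    refine card_le_card_of_injOn (pencil p) (fun d hd => (mem_filter.mp hd).2) ?_
    rintro (_ | m) - (_ | m') - h <;> simp only [pencil] at h <;> (try split_ifs at h) <;> simp_all
  have hbad : (univ.filter (pencil p · ∉ good)).card ≤ if p.2 = 0 then 0 else 1 := by
    split_ifs with hp2
    · exact (card_eq_zero.mpr (filter_eq_empty_iff.mpr fun d _ hd =>
        (bad_pencil hp hd).1 hp2)).le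
    · exact card_le_one.mpr fun d hd d' hd' =>
        (bad_pencil hp (mem_filter.mp hd).2).2.trans (bad_pencil hp (mem_filter.mp hd').2).2.symm
  have hsplit := card_filter_add_card_filter_not (s := univ) (pencil p · ∈ good)
  rw [card_univ, Fintype.card_option] at hsplit
  split_ifs at hbad ⊢ <;> omega

theorem card_add_one_le_hyperDeg_origin :
    Fintype.card F + 1 ≤ hyperDeg (edges F) (0, 0) := by
  set throughOrigin : Finset ((F × F) ⊕ F ⊕ F) :=
    insert (.inl (0, 0)) (insert (.inl (1, 0)) ((univ.erase 0).image (.inr ∘ .inl)))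
  have hcard : throughOrigin.card = Fintype.card F + 1 := by
    rw [card_insert_of_notMem (by simp), card_insert_of_notMem (by simp),
      card_image_of_injective _ (Sum.inr_injective.comp Sum.inl_injective),
      card_erase_of_mem (mem_univ _), card_univ]
    have := Fintype.card_pos (α := F)
    omega
  rw [← hcard, hyperDeg_edges]
  refine card_le_card fun l hl => ?_
  simp only [throughOrigin, mem_insert, mem_image, mem_erase, mem_univ, and_true,
    Function.comp_apply] at hl
  rcases hl with rfl | rfl | ⟨y, hy, rfl⟩ <;> simp [*]

theorem hyperDeg_edges_le (p : F × F) : hyperDeg (edges F) p ≤ Fintype.card F + 1 := by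
  have h := hyperDeg_mul_le_of_linear linear_edges card_of_mem_edges p
  rw [Fintype.card_prod] at h
  obtain ⟨j, hj⟩ := Nat.exists_eq_add_of_lt (Fintype.one_lt_card (α := F))
  rw [hj] at h ⊢
  rw [Nat.add_sub_cancel,
    Nat.sub_eq_of_eq_add (by ring : (1 + j + 1) * (1 + j + 1) = (j + 3) * (1 + j) + 1)] at h
  have := Nat.le_of_mul_le_mul_right h (by omega)
  omega

theorem hyperDeg_edges_of_snd_eq_zero {p : F × F} (hp : p.2 = 0) :
    hyperDeg (edges F) p = Fintype.card F + 1 := by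
  refine le_antisymm (hyperDeg_edges_le p) ?_
  by_cases hp0 : p = (0, 0)
  · exact hp0 ▸ card_add_one_le_hyperDeg_origin
  · simpa [hp] using le_hyperDeg_edges_of_ne hp0

theorem inClassH_edges : InClassH (Fintype.card F) (edges F) := by
  refine ⟨linear_edges, card_of_mem_edges, card_edges, line 0 0,
    mem_image.mpr ⟨.inl (0, 0), by simp, rfl⟩, fun p hp => ?_, fun p hp => ?_⟩
  · exact hyperDeg_edges_of_snd_eq_zero (by simpa using hp)
  · have hp0 : p ≠ (0, 0) := fun h => hp (h ▸ by simp)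
    exact (Nat.le_add_right _ _).trans (le_hyperDeg_edges_of_ne hp0)

theorem colorableWith_edges : ColorableWith (edges F) (2 * Fintype.card F - 1) := by
  have hcard : Fintype.card (F ⊕ Fˣ) = 2 * Fintype.card F - 1 := by
    rw [Fintype.card_sum, Fintype.card_units]
    have := Fintype.card_pos (α := F)
    omega
  rw [← hcard]
  refine colorableWith_of_cover (Sum.elim (fun m => Set.range (line m))
    (fun u => {bentRow (u : F), vertLine (u : F)})) (Sum.forall.mpr ⟨fun m => ?_, fun u => ?_⟩) ?_
  · rintro _ ⟨b, rfl⟩ _ ⟨b', rfl⟩ hne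
    refine disjoint_left.mpr fun p hp hp' => hne ?_
    rw [id, mem_line] at hp hp'
    rw [show b = b' by linear_combination hp' - hp]
  · refine Set.pairwise_pair.mpr fun _ => ⟨?_, ?_⟩ <;>
      simp only [Function.onFun, id, disjoint_left, mem_bentRow, mem_vertLine]
    · rintro p (rfl | ⟨-, hp⟩) hpu
      exacts [u.ne_zero hpu.symm, hp hpu]
    · rintro p hpu (rfl | ⟨-, hp⟩)
      exacts [u.ne_zero hpu.symm, hp hpu]
  · rw [forall_mem_edges]
    exact ⟨⟨.inl 0, 0, rfl⟩, ⟨.inl 1, 0, rfl⟩, fun m b _ _ => ⟨.inl m, b, rfl⟩,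
      fun y hy => ⟨.inr (Units.mk0 y hy), by simp⟩, fun a ha => ⟨.inr (Units.mk0 a ha), by simp⟩⟩

theorem not_disjoint_line_zero_zero : ∀ f ∈ edges F, ¬Disjoint (line 0 0) f := by
  have hmeet : ∀ f : Finset (F × F), ∀ x, (x, 0) ∈ f → ¬Disjoint (line 0 0) f :=
    fun f x hx => not_disjoint_iff.mpr ⟨(x, 0), by simp, hx⟩
  rw [forall_mem_edges]
  refine ⟨hmeet _ 0 (by simp), hmeet _ 0 (by simp), fun m b hm _ => hmeet _ (-b / m) ?_,
    fun y _ => hmeet _ 0 (by simp), fun a _ => hmeet _ a (by simp)⟩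
  rw [mem_line]
  field_simp
  ring

theorem mem_of_disjoint_bentRow (y : F) :
    ∀ f ∈ edges F, Disjoint (bentRow y) f → (y, y) ∈ f := by
  have horigin : ∀ f : Finset (F × F), ((0 : F), (0 : F)) ∈ f → Disjoint (bentRow y) f →
      (y, y) ∈ f := fun f hf hdisj => absurd hdisj (not_disjoint_iff.mpr ⟨(0, 0), by simp, hf⟩)
  have hrow : ∀ f : Finset (F × F), ∀ x, (x, y) ∈ f → Disjoint (bentRow y) f → x = y := by
    intro f x hx hdisj
    by_contra hxy
    exact not_disjoint_iff.mpr ⟨(x, y), by simp [hxy], hx⟩ hdisj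
  rw [forall_mem_edges]
  refine ⟨horigin _ (by simp), horigin _ (by simp), fun m b hm _ hdisj => ?_,
    fun y' _ => horigin _ (by simp), fun a _ hdisj => ?_⟩
  · have hmem : ((y - b) / m, y) ∈ line m b := by
      rw [mem_line]
      field_simp
      ring
    rwa [hrow _ _ hmem hdisj] at hmem
  · rw [hrow _ a (by simp) hdisj]
    simp

theorem exists_mem_of_disjoint :
    ∀ e ∈ edges F, (0, 0) ∈ e → e ≠ line 1 0 → ∃ p, ∀ f ∈ edges F, Disjoint e f → p ∈ f := by
  rw [forall_mem_edges]
  refine ⟨fun _ _ => ⟨(0, 0), fun f hf hdisj => absurd hdisj (not_disjoint_line_zero_zero f hf)⟩,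
    fun _ h => absurd rfl h, fun m b _ hb h0 => absurd ?_ hb,
    fun y _ _ _ => ⟨(y, y), mem_of_disjoint_bentRow y⟩, fun a ha h0 => absurd ?_ ha⟩
  · exact (by simpa using h0 : 0 = b).symm
  · exact (mem_vertLine.mp h0).symm

theorem chromIndex_edges (hF : 3 ≤ Fintype.card F) :
    chromIndex (edges F) = 2 * Fintype.card F - 1 :=
  le_antisymm (Nat.sInf_le colorableWith_edges) <|
    le_csInf ⟨_, colorableWith_edges⟩ fun _ hq =>
      two_mul_sub_one_le_of_colorableWith hF card_of_mem_edges (by rw [Fintype.card_prod, sq])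
        card_edges (hyperDeg_edges_of_snd_eq_zero (p := (0, 0)) rfl) exists_mem_of_disjoint hq

end BentPlane

theorem stmt16 (k : ℕ) (hk : 3 ≤ k)
    (hpp : ∃ p m : ℕ, p.Prime ∧ 1 ≤ m ∧ k = p ^ m) :
    ∃ E : Finset (Finset (Fin (k ^ 2))),
      Linear E ∧ (∀ e ∈ E, e.card = k) ∧ E.card = k ^ 2 + 1 ∧
      (∃ e₀ ∈ E, (∀ x ∈ e₀, hyperDeg E x = k + 1) ∧
        ∀ x : Fin (k ^ 2), x ∉ e₀ → k ≤ hyperDeg E x) ∧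
      chromIndex E = 2 * k - 1 := by
  obtain ⟨p, m, hp, hm, rfl⟩ := hpp
  have : Fact p.Prime := ⟨hp⟩
  let F := GaloisField p m
  let : Fintype F := Fintype.ofFinite F
  have hF : Fintype.card F = p ^ m := by
    rw [← Nat.card_eq_fintype_card, GaloisField.card p m (by omega)]
  classical
  let φ : F × F ≃ Fin ((p ^ m) ^ 2) := Fintype.equivFinOfCardEq (by rw [Fintype.card_prod, hF, sq])
  obtain ⟨hlin, hunif, hcard, hdeg⟩ := hF ▸ (BentPlane.inClassH_edges (F := F)).map φ
  refine ⟨_, hlin, hunif, hcard, hdeg, ?_⟩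
  rw [chromIndex_map, BentPlane.chromIndex_edges (hF ▸ hk), hF]
end
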